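/- arXiv:1304.0884 — 10 statements merged into one kernel-verified Lean document; each statement's English description precedes it below -/
import Mathlib

section
/- As n → ∞, the sum ∑ 1/((r+ℓ)(ℓ+s)), taken over all integers k₁ ≥ 1, r ≥ 0, ℓ ≥ 1, s ≥ 0 with k₁ + r + ℓ + s ≤ n, is asymptotically equivalent to (π²/12)·n². -/
/-!
Put `a = r + ℓ`, `b = ℓ + s` and `k = r + ℓ + s`. For fixed `k` the triples `(r, ℓ, s)`
correspond to the pairs `(a, b) ∈ [1, k]²` with `a + b > k`, and `k₁` ranges over `n - k` values,
so the sum is `∑_{k < n} (n - k) U(k)` with `U(k) = ∑_{a, b ≤ k, a + b > k} 1 / (a b)`.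
Passing from `U(k)` to `U(k + 1)` adds the row and column `k + 1`, worth
`2 H_k / (k + 1) + 1 / (k + 1)²` with `H_k = ∑_{m ≤ k} 1 / m`, and removes the antidiagonal `a + b = k + 1`, which by the partial
fractions `1 / (a (k + 1 - a)) = (1 / a + 1 / (k + 1 - a)) / (k + 1)` is worth `2 H_k / (k + 1)`.
Hence `U(k) = ∑_{m ≤ k} 1 / m²`, which tends to `ζ(2) = π² / 6`; the weights `n - k` have total
`~ n² / 2`, and the weighted mean of `U` tends to the same limit.
-/

open Filter Finset Topology Real Asymptotics

lemma sum_range_natCast_sub (n : ℕ) : ∑ k ∈ range n, ((n : ℝ) - k) = n * (n + 1) / 2 := by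
  induction n with
  | zero => simp
  | succ n ih =>
    rw [sum_range_succ]
    simp only [Nat.cast_succ, add_sub_right_comm _ (1 : ℝ), sum_add_distrib, ih, sum_const,
      card_range, nsmul_eq_mul]
    ring

lemma tendsto_sum_range_sub_mul_div_sq {u : ℕ → ℝ} {L : ℝ} (hu : Tendsto u atTop (𝓝 L)) :
    Tendsto (fun n : ℕ => (∑ k ∈ range n, ((n : ℝ) - k) * u k) / (n : ℝ) ^ 2) atTop
      (𝓝 (L / 2)) := by
  set v : ℕ → ℝ := fun k => u k - L
  have hv : (fun n => ∑ k ∈ range n, ‖v k‖) =o[atTop] fun n => (n : ℝ) :=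
    isLittleO_sum_range_of_tendsto_zero <| by
      simpa using (tendsto_sub_nhds_zero_iff.2 hu).norm
  have hbound (n : ℕ) :
      ‖∑ k ∈ range n, ((n : ℝ) - k) * v k‖ ≤ ‖(n : ℝ) * ∑ k ∈ range n, ‖v k‖‖ :=
    calc ‖∑ k ∈ range n, ((n : ℝ) - k) * v k‖
        ≤ ∑ k ∈ range n, ‖((n : ℝ) - k) * v k‖ := norm_sum_le _ _
      _ ≤ ∑ k ∈ range n, (n : ℝ) * ‖v k‖ := sum_le_sum fun k hk => by
        have hk : (k : ℝ) < n := by exact_mod_cast mem_range.1 hk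
        rw [norm_mul, Real.norm_of_nonneg (by linarith)]
        gcongr
        linarith [k.cast_nonneg (α := ℝ)]
      _ = ‖(n : ℝ) * ∑ k ∈ range n, ‖v k‖‖ := by
        rw [Real.norm_of_nonneg (by positivity), mul_sum]
  have hw : (fun n : ℕ => ∑ k ∈ range n, ((n : ℝ) - k) * v k) =o[atTop] fun n => (n : ℝ) ^ 2 := by
    simpa only [sq] using
      (isBigO_of_le _ hbound).trans_isLittleO ((isBigO_refl _ _).mul_isLittleO hv)
  have hmean : Tendsto (fun n : ℕ => L * ((1 + 1 / (n : ℝ)) / 2)) atTop (𝓝 (L / 2)) := by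
    simpa [div_eq_mul_inv] using
      ((tendsto_one_div_atTop_nhds_zero_nat.const_add 1).div_const 2).const_mul L
  have hlim := hw.tendsto_div_nhds_zero.add hmean
  rw [zero_add] at hlim
  refine hlim.congr' ?_
  filter_upwards [eventually_ne_atTop 0] with n hn
  have hsplit : ∑ k ∈ range n, ((n : ℝ) - k) * v k
      = ∑ k ∈ range n, ((n : ℝ) - k) * u k - (∑ k ∈ range n, ((n : ℝ) - k)) * L := by
    rw [sum_mul, ← sum_sub_distrib]
    simp only [v, mul_sub]
  rw [hsplit, sum_range_natCast_sub]
  field_simp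
  ring

lemma tendsto_sum_Icc_one_div_sq :
    Tendsto (fun k : ℕ => ∑ m ∈ Icc 1 k, 1 / (m : ℝ) ^ 2) atTop (𝓝 (π ^ 2 / 6)) := by
  refine (hasSum_zeta_two.tendsto_sum_nat.comp (tendsto_add_atTop_nat 1)).congr fun k => ?_
  rw [Function.comp_apply, range_eq_Ico, sum_eq_sum_Ico_succ_bot k.succ_pos,
    Nat.succ_eq_add_one, Ico_add_one_right_eq_Icc]
  simp

lemma sum_Icc_one_div_reflect (k : ℕ) :
    ∑ a ∈ Icc 1 k, 1 / ((k : ℝ) + 1 - a) = ∑ a ∈ Icc 1 k, 1 / (a : ℝ) := by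
  refine sum_nbij' (k + 1 - ·) (k + 1 - ·) ?_ ?_ ?_ ?_ fun a ha => ?_
  iterate 4
    intro a ha
    simp only [mem_Icc] at ha ⊢
    omega
  rw [Nat.cast_sub (by have := mem_Icc.1 ha; omega)]
  push_cast
  ring

lemma sum_Icc_one_div_mul_reflect (k : ℕ) :
    ∑ a ∈ Icc 1 k, 1 / ((a : ℝ) * (k + 1 - a)) = 2 / (k + 1) * ∑ a ∈ Icc 1 k, 1 / (a : ℝ) := by
  have hsplit : ∀ a ∈ Icc 1 k, 1 / ((a : ℝ) * (k + 1 - a))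
      = (1 / (a : ℝ) + 1 / ((k : ℝ) + 1 - a)) / (k + 1) := by
    intro a ha
    have ha : 1 ≤ a ∧ a ≤ k := mem_Icc.1 ha
    have h1 : (1 : ℝ) ≤ a := by exact_mod_cast ha.1
    have h2 : (a : ℝ) ≤ k := by exact_mod_cast ha.2
    field_simp [show (k : ℝ) + 1 - a ≠ 0 by linarith]
    ring
  rw [sum_congr rfl hsplit, ← sum_div, sum_add_distrib, sum_Icc_one_div_reflect]
  ring

def upperTriangle (k : ℕ) : Finset (ℕ × ℕ) := {p ∈ Icc 1 k ×ˢ Icc 1 k | k < p.1 + p.2}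

lemma sum_upperTriangle_eq_sum_Icc_ite {M : Type*} [AddCommMonoid M] (k : ℕ) (f : ℕ → ℕ → M) :
    ∑ p ∈ upperTriangle k, f p.1 p.2 =
      ∑ a ∈ Icc 1 k, ∑ b ∈ Icc 1 k, if k < a + b then f a b else 0 := by
  rw [upperTriangle, sum_filter, sum_product]

lemma sum_upperTriangle_succ (k : ℕ) :
    ∑ p ∈ upperTriangle (k + 1), 1 / ((p.1 : ℝ) * p.2)
      = ∑ p ∈ upperTriangle k, 1 / ((p.1 : ℝ) * p.2) + 1 / ((k : ℝ) + 1) ^ 2 := by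
  have hold : ∀ a ∈ Icc 1 k, ∑ b ∈ Icc 1 k, (if k < a + b then 1 / ((a : ℝ) * b) else 0)
      = ∑ b ∈ Icc 1 k, (if k + 1 < a + b then 1 / ((a : ℝ) * b) else 0)
        + 1 / ((a : ℝ) * (k + 1 - a)) := by
    intro a ha
    have ha : 1 ≤ a ∧ a ≤ k := mem_Icc.1 ha
    have hdiag : ∑ b ∈ Icc 1 k, (if a + b = k + 1 then 1 / ((a : ℝ) * b) else 0)
        = 1 / ((a : ℝ) * (k + 1 - a)) := by
      rw [sum_eq_single_of_mem (k + 1 - a) (mem_Icc.2 (by omega)), if_pos (by omega),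
        Nat.cast_sub (by omega)]
      · push_cast; ring
      · intro b _ hb
        exact if_neg (by omega)
    rw [← hdiag, ← sum_add_distrib]
    refine sum_congr rfl fun b _ => ?_
    split_ifs <;> first | omega | simp
  have hnew : ∀ a ∈ Icc 1 k,
      ∑ b ∈ Icc 1 (k + 1), (if k + 1 < a + b then 1 / ((a : ℝ) * b) else 0)
        = ∑ b ∈ Icc 1 k, (if k + 1 < a + b then 1 / ((a : ℝ) * b) else 0)
          + 1 / ((a : ℝ) * (k + 1)) := by
    intro a ha
    rw [sum_Icc_succ_top (by omega), if_pos (by have := mem_Icc.1 ha; omega)]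
    push_cast; rfl
  have hcorner : ∑ b ∈ Icc 1 (k + 1),
      (if k + 1 < (k + 1) + b then 1 / (((k + 1 : ℕ) : ℝ) * b) else 0)
        = ∑ b ∈ Icc 1 k, 1 / (b : ℝ) / (k + 1) + 1 / ((k : ℝ) + 1) ^ 2 := by
    rw [sum_Icc_succ_top (by omega), if_pos (by omega)]
    congr 1
    · refine sum_congr rfl fun b hb => ?_
      rw [if_pos (by have := mem_Icc.1 hb; omega), div_div, mul_comm]
      push_cast
      rfl
    · push_cast
      ring
  have hcol : ∑ a ∈ Icc 1 k, 1 / ((a : ℝ) * (k + 1)) = ∑ a ∈ Icc 1 k, 1 / (a : ℝ) / (k + 1) :=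
    sum_congr rfl fun a _ => by rw [div_div]
  rw [sum_upperTriangle_eq_sum_Icc_ite k (fun a b => 1 / ((a : ℝ) * b)),
    sum_upperTriangle_eq_sum_Icc_ite (k + 1) (fun a b => 1 / ((a : ℝ) * b)), sum_Icc_succ_top (by omega),
    sum_congr rfl hnew, sum_congr rfl hold, hcorner, sum_add_distrib, sum_add_distrib, hcol,
    sum_Icc_one_div_mul_reflect, ← sum_div]
  ring

lemma sum_upperTriangle_one_div_mul (k : ℕ) :
    ∑ p ∈ upperTriangle k, 1 / ((p.1 : ℝ) * p.2) = ∑ m ∈ Icc 1 k, 1 / (m : ℝ) ^ 2 := by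
  induction k with
  | zero => rfl
  | succ k ih =>
    rw [sum_upperTriangle_succ, ih, sum_Icc_succ_top (by omega)]
    push_cast
    rfl

lemma sum_quadruple_eq_sum_range_mul_sum_upperTriangle (n : ℕ) :
    ∑ p ∈ (Icc 1 n ×ˢ range (n + 1) ×ˢ Icc 1 n ×ˢ range (n + 1)).filter
        (fun p : ℕ × ℕ × ℕ × ℕ => p.1 + p.2.1 + p.2.2.1 + p.2.2.2 ≤ n),
      1 / (((p.2.1 : ℝ) + p.2.2.1) * ((p.2.2.1 : ℝ) + p.2.2.2))
    = ∑ k ∈ range n, ((n : ℝ) - k) * ∑ p ∈ upperTriangle k, 1 / ((p.1 : ℝ) * p.2) := by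
  calc _ = ∑ x ∈ (range n).sigma (fun k => Icc 1 (n - k) ×ˢ upperTriangle k),
          1 / ((x.2.2.1 : ℝ) * x.2.2.2) := by
        refine sum_nbij'
          (fun p => ⟨p.2.1 + p.2.2.1 + p.2.2.2, p.1, p.2.1 + p.2.2.1, p.2.2.1 + p.2.2.2⟩)
          (fun x => (x.2.1, x.1 - x.2.2.2, x.2.2.1 + x.2.2.2 - x.1, x.1 - x.2.2.1))
          ?_ ?_ ?_ ?_ fun p _ => by push_cast; rfl
        all_goals
          rintro ⟨a, b, c, d⟩ hx
          simp only [upperTriangle, mem_filter, mem_sigma, mem_product, mem_Icc, mem_range,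
            Prod.mk.injEq, Sigma.mk.injEq, heq_eq_eq] at hx ⊢
          grind
    _ = _ := by
        rw [sum_sigma]
        refine sum_congr rfl fun k hk => ?_
        rw [sum_product]
        dsimp only
        rw [sum_const, Nat.card_Icc, nsmul_eq_mul, Nat.add_sub_cancel,
          Nat.cast_sub (mem_range.1 hk).le]

/-- As `n → ∞`, the sum `∑ 1/((r+ℓ)(ℓ+s))` over integers `k₁ ≥ 1`, `r ≥ 0`, `ℓ ≥ 1`,
`s ≥ 0` with `k₁ + r + ℓ + s ≤ n` is asymptotically equivalent to `(π²/12)·n²`. -/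
theorem sum_inv_rl_ls_quadruple_asymptotic :
    Tendsto (fun n : ℕ =>
      (∑ p ∈ (Finset.Icc 1 n ×ˢ Finset.range (n + 1) ×ˢ
          Finset.Icc 1 n ×ˢ Finset.range (n + 1)).filter
          (fun p : ℕ × ℕ × ℕ × ℕ => p.1 + p.2.1 + p.2.2.1 + p.2.2.2 ≤ n),
        1 / (((p.2.1 : ℝ) + p.2.2.1) * ((p.2.2.1 : ℝ) + p.2.2.2)))
        / ((Real.pi ^ 2 / 12) * (n : ℝ) ^ 2))
      atTop (nhds 1) := by
  have hlim := (tendsto_sum_range_sub_mul_div_sq tendsto_sum_Icc_one_div_sq).div_const (π ^ 2 / 12)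
  rw [show π ^ 2 / 6 / 2 / (π ^ 2 / 12) = 1 by field_simp; ring] at hlim
  refine hlim.congr fun n => ?_
  simp only [sum_quadruple_eq_sum_range_mul_sum_upperTriangle, sum_upperTriangle_one_div_mul]
  rw [div_div, mul_comm (π ^ 2 / 12)]
end

section
/- As n → ∞, the sum ∑ 1/((r+ℓ)(ℓ+s)), taken over all integers r ≥ 0, ℓ ≥ 1, s ≥ 0 with r + ℓ + s ≤ n, is asymptotically equivalent to (π²/6)·n. -/
open Filter Finset

/-- harmonic number -/
noncomputable def Hh (n : ℕ) : ℝ := ∑ k ∈ Finset.Icc 1 n, (1 : ℝ) / k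

/-- partial sum of 1/k^2 -/
noncomputable def H2 (n : ℕ) : ℝ := ∑ k ∈ Finset.Icc 1 n, (1 : ℝ) / (k : ℝ) ^ 2

lemma Hh_succ (n : ℕ) : Hh (n + 1) = Hh n + 1 / (n + 1 : ℝ) := by
  unfold Hh
  rw [Finset.sum_Icc_succ_top (by omega)]
  push_cast; ring

lemma H2_succ (n : ℕ) : H2 (n + 1) = H2 n + 1 / ((n : ℝ) + 1) ^ 2 := by
  unfold H2
  rw [Finset.sum_Icc_succ_top (by omega)]
  push_cast; ring

lemma sum_refl (m : ℕ) :
    ∑ i ∈ Finset.Icc 1 m, (1 : ℝ) / ((m + 1 - i : ℕ) : ℝ) = Hh m := by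
  unfold Hh
  refine Finset.sum_nbij' (fun i => m + 1 - i) (fun i => m + 1 - i) ?_ ?_ ?_ ?_ ?_
  all_goals intro a ha
  all_goals simp only [Finset.mem_Icc] at *
  all_goals first | rfl | omega

lemma slice_sum (m : ℕ) :
    ∑ p ∈ (Finset.Icc 1 (m+1) ×ˢ Finset.Icc 1 (m+1)).filter
        (fun p : ℕ × ℕ => p.1 + p.2 = m + 1),
      (1 : ℝ) / ((p.1 : ℝ) * (p.2 : ℝ)) = 2 / ((m : ℝ) + 1) * Hh m := by
  have key : ∑ p ∈ (Finset.Icc 1 (m+1) ×ˢ Finset.Icc 1 (m+1)).filter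
        (fun p : ℕ × ℕ => p.1 + p.2 = m + 1),
      (1 : ℝ) / ((p.1 : ℝ) * (p.2 : ℝ))
      = ∑ i ∈ Finset.Icc 1 m, (1 : ℝ) / ((i : ℝ) * ((m + 1 - i : ℕ) : ℝ)) := by
    refine Finset.sum_nbij' (fun p : ℕ × ℕ => p.1) (fun i => (i, m + 1 - i)) ?_ ?_ ?_ ?_ ?_
    · intro a ha
      simp only [Finset.mem_Icc, Finset.mem_filter, Finset.mem_product] at ha ⊢
      omega
    · intro a ha
      simp only [Finset.mem_Icc, Finset.mem_filter, Finset.mem_product] at ha ⊢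
      omega
    · intro a ha
      simp only [Finset.mem_Icc, Finset.mem_filter, Finset.mem_product] at ha
      obtain ⟨x, y⟩ := a
      simp only [Prod.mk.injEq]
      dsimp only at ha ⊢
      exact ⟨trivial, by omega⟩
    · intro a ha
      rfl
    · intro a ha
      simp only [Finset.mem_Icc, Finset.mem_filter, Finset.mem_product] at ha
      have hy : a.2 = m + 1 - a.1 := by omega
      rw [hy]
  rw [key]
  have step : ∀ i ∈ Finset.Icc 1 m,
      (1 : ℝ) / ((i : ℝ) * ((m + 1 - i : ℕ) : ℝ))
      = 1 / ((m : ℝ) + 1) * (1 / (i : ℝ) + 1 / ((m + 1 - i : ℕ) : ℝ)) := by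
    intro i hi
    simp only [Finset.mem_Icc] at hi
    have h1 : ((m + 1 - i : ℕ) : ℝ) = (m : ℝ) + 1 - (i : ℝ) := by
      push_cast [Nat.cast_sub (by omega : i ≤ m + 1)]; ring
    have hi0 : (i : ℝ) ≥ 1 := by exact_mod_cast hi.1
    have hj0 : ((m + 1 - i : ℕ) : ℝ) ≥ 1 := by
      have : (1 : ℕ) ≤ m + 1 - i := by omega
      exact_mod_cast this
    have hij : (i : ℝ) + ((m + 1 - i : ℕ) : ℝ) = (m : ℝ) + 1 := by rw [h1]; ring
    field_simp
    linarith [hij]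
  rw [Finset.sum_congr rfl step, ← Finset.mul_sum, Finset.sum_add_distrib, sum_refl]
  unfold Hh
  ring

noncomputable def Csum (m : ℕ) : ℝ :=
  ∑ p ∈ (Finset.Icc 1 m ×ˢ Finset.Icc 1 m).filter (fun p : ℕ × ℕ => p.1 + p.2 ≤ m),
    (1 : ℝ) / ((p.1 : ℝ) * (p.2 : ℝ))

lemma Csum_eq (m : ℕ) : Csum m = Hh m ^ 2 - H2 m := by
  induction m with
  | zero => simp [Csum, Hh, H2]
  | succ n ih =>
    have split := Finset.sum_filter_add_sum_filter_not
      ((Finset.Icc 1 (n+1) ×ˢ Finset.Icc 1 (n+1)).filter (fun p : ℕ × ℕ => p.1 + p.2 ≤ n + 1))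
      (fun p : ℕ × ℕ => p.1 + p.2 ≤ n)
      (fun p : ℕ × ℕ => (1 : ℝ) / ((p.1 : ℝ) * (p.2 : ℝ)))
    have e1 : ((Finset.Icc 1 (n+1) ×ˢ Finset.Icc 1 (n+1)).filter
          (fun p : ℕ × ℕ => p.1 + p.2 ≤ n + 1)).filter (fun p : ℕ × ℕ => p.1 + p.2 ≤ n)
        = (Finset.Icc 1 n ×ˢ Finset.Icc 1 n).filter (fun p : ℕ × ℕ => p.1 + p.2 ≤ n) := by
      ext p
      simp only [Finset.mem_filter, Finset.mem_product, Finset.mem_Icc]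
      omega
    have e2 : ((Finset.Icc 1 (n+1) ×ˢ Finset.Icc 1 (n+1)).filter
          (fun p : ℕ × ℕ => p.1 + p.2 ≤ n + 1)).filter (fun p : ℕ × ℕ => ¬(p.1 + p.2 ≤ n))
        = (Finset.Icc 1 (n+1) ×ˢ Finset.Icc 1 (n+1)).filter
          (fun p : ℕ × ℕ => p.1 + p.2 = n + 1) := by
      ext p
      simp only [Finset.mem_filter, Finset.mem_product, Finset.mem_Icc]
      omega
    rw [e1, e2] at split
    have : Csum (n+1) = Csum n + 2 / ((n : ℝ) + 1) * Hh n := by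
      rw [Csum, Csum, ← split, slice_sum]
    rw [this, ih, Hh_succ, H2_succ]
    have h0 : (n : ℝ) + 1 ≠ 0 := by positivity
    field_simp
    ring

lemma Usum_eq (m : ℕ) :
    ∑ p ∈ (Finset.Icc 1 m ×ˢ Finset.Icc 1 m).filter (fun p : ℕ × ℕ => m + 1 ≤ p.1 + p.2),
      (1 : ℝ) / ((p.1 : ℝ) * (p.2 : ℝ)) = H2 m := by
  have split := Finset.sum_filter_add_sum_filter_not
    (Finset.Icc 1 m ×ˢ Finset.Icc 1 m)
    (fun p : ℕ × ℕ => p.1 + p.2 ≤ m)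
    (fun p : ℕ × ℕ => (1 : ℝ) / ((p.1 : ℝ) * (p.2 : ℝ)))
  have e2 : (Finset.Icc 1 m ×ˢ Finset.Icc 1 m).filter (fun p : ℕ × ℕ => ¬(p.1 + p.2 ≤ m))
      = (Finset.Icc 1 m ×ˢ Finset.Icc 1 m).filter (fun p : ℕ × ℕ => m + 1 ≤ p.1 + p.2) := by
    ext p
    simp only [Finset.mem_filter, Finset.mem_product, Finset.mem_Icc]
    omega
  have full : ∑ p ∈ Finset.Icc 1 m ×ˢ Finset.Icc 1 m,
      (1 : ℝ) / ((p.1 : ℝ) * (p.2 : ℝ)) = Hh m ^ 2 := by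
    rw [Finset.sum_product]
    have : ∀ i : ℕ, ∀ j : ℕ, (1 : ℝ) / ((i : ℝ) * (j : ℝ)) = (1 / (i : ℝ)) * (1 / (j : ℝ)) := by
      intro i j; rw [div_mul_div_comm, one_mul]
    simp_rw [this, ← Finset.mul_sum, ← Finset.sum_mul]
    rw [Hh, sq]
  rw [e2] at split
  have hc : Csum m + ∑ p ∈ (Finset.Icc 1 m ×ˢ Finset.Icc 1 m).filter
      (fun p : ℕ × ℕ => m + 1 ≤ p.1 + p.2), (1 : ℝ) / ((p.1 : ℝ) * (p.2 : ℝ)) = Hh m ^ 2 := by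
    rw [Csum, split, full]
  rw [Csum_eq] at hc
  linarith

lemma tslice (n : ℕ) :
    ∑ p ∈ ((Finset.range (n + 2) ×ˢ Finset.Icc 1 (n + 1) ×ˢ Finset.range (n + 2)).filter
        (fun p : ℕ × ℕ × ℕ => p.1 + p.2.1 + p.2.2 = n + 1)),
      1 / (((p.1 : ℝ) + p.2.1) * ((p.2.1 : ℝ) + p.2.2)) = H2 (n + 1) := by
  rw [← Usum_eq (n + 1)]
  refine Finset.sum_nbij' (fun p : ℕ × ℕ × ℕ => (p.1 + p.2.1, p.2.1 + p.2.2))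
    (fun q : ℕ × ℕ => (n + 1 - q.2, q.1 + q.2 - (n + 1), n + 1 - q.1)) ?_ ?_ ?_ ?_ ?_
  · intro a ha
    simp only [Finset.mem_filter, Finset.mem_product, Finset.mem_Icc, Finset.mem_range] at ha ⊢
    omega
  · intro a ha
    simp only [Finset.mem_filter, Finset.mem_product, Finset.mem_Icc, Finset.mem_range] at ha ⊢
    omega
  · intro a ha
    simp only [Finset.mem_filter, Finset.mem_product, Finset.mem_Icc, Finset.mem_range] at ha
    obtain ⟨r, l, s⟩ := a
    simp only [Prod.mk.injEq]
    dsimp only at ha ⊢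
    omega
  · intro a ha
    simp only [Finset.mem_filter, Finset.mem_product, Finset.mem_Icc] at ha
    obtain ⟨i, j⟩ := a
    simp only [Prod.mk.injEq]
    dsimp only at ha ⊢
    omega
  · intro a ha
    simp only [Finset.mem_filter, Finset.mem_product, Finset.mem_Icc, Finset.mem_range] at ha
    dsimp only
    push_cast
    ring

lemma S_eq (n : ℕ) :
    ∑ p ∈ ((Finset.range (n + 1) ×ˢ Finset.Icc 1 n ×ˢ Finset.range (n + 1)).filter
        (fun p : ℕ × ℕ × ℕ => p.1 + p.2.1 + p.2.2 ≤ n)),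
      1 / (((p.1 : ℝ) + p.2.1) * ((p.2.1 : ℝ) + p.2.2)) = ∑ m ∈ Finset.Icc 1 n, H2 m := by
  induction n with
  | zero => simp
  | succ n ih =>
    have split := Finset.sum_filter_add_sum_filter_not
      ((Finset.range (n + 2) ×ˢ Finset.Icc 1 (n + 1) ×ˢ Finset.range (n + 2)).filter
        (fun p : ℕ × ℕ × ℕ => p.1 + p.2.1 + p.2.2 ≤ n + 1))
      (fun p : ℕ × ℕ × ℕ => p.1 + p.2.1 + p.2.2 ≤ n)
      (fun p : ℕ × ℕ × ℕ => 1 / (((p.1 : ℝ) + p.2.1) * ((p.2.1 : ℝ) + p.2.2)))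
    have e1 : ((Finset.range (n + 2) ×ˢ Finset.Icc 1 (n + 1) ×ˢ Finset.range (n + 2)).filter
          (fun p : ℕ × ℕ × ℕ => p.1 + p.2.1 + p.2.2 ≤ n + 1)).filter
          (fun p : ℕ × ℕ × ℕ => p.1 + p.2.1 + p.2.2 ≤ n)
        = (Finset.range (n + 1) ×ˢ Finset.Icc 1 n ×ˢ Finset.range (n + 1)).filter
          (fun p : ℕ × ℕ × ℕ => p.1 + p.2.1 + p.2.2 ≤ n) := by
      ext p
      simp only [Finset.mem_filter, Finset.mem_product, Finset.mem_Icc, Finset.mem_range]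
      omega
    have e2 : ((Finset.range (n + 2) ×ˢ Finset.Icc 1 (n + 1) ×ˢ Finset.range (n + 2)).filter
          (fun p : ℕ × ℕ × ℕ => p.1 + p.2.1 + p.2.2 ≤ n + 1)).filter
          (fun p : ℕ × ℕ × ℕ => ¬(p.1 + p.2.1 + p.2.2 ≤ n))
        = (Finset.range (n + 2) ×ˢ Finset.Icc 1 (n + 1) ×ˢ Finset.range (n + 2)).filter
          (fun p : ℕ × ℕ × ℕ => p.1 + p.2.1 + p.2.2 = n + 1) := by
      ext p
      simp only [Finset.mem_filter, Finset.mem_product, Finset.mem_Icc, Finset.mem_range]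
      omega
    rw [e1, e2, ih, tslice] at split
    rw [← split, Finset.sum_Icc_succ_top (by omega : 1 ≤ n + 1)]

lemma H2_range (m : ℕ) : H2 m = ∑ i ∈ Finset.range (m + 1), (1 : ℝ) / (i : ℝ) ^ 2 := by
  induction m with
  | zero => simp [H2]
  | succ n ih => rw [H2_succ, Finset.sum_range_succ, ih]; push_cast; ring

lemma H2_tendsto : Tendsto H2 atTop (nhds (Real.pi ^ 2 / 6)) := by
  have h := hasSum_zeta_two.tendsto_sum_nat
  have h2 := h.comp (tendsto_add_atTop_nat 1)
  refine h2.congr fun m => ?_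
  simp only [Function.comp]
  rw [← H2_range]

lemma Icc_sum_eq_range (n : ℕ) :
    ∑ i ∈ Finset.range n, H2 (i + 1) = ∑ m ∈ Finset.Icc 1 n, H2 m := by
  induction n with
  | zero => simp
  | succ n ih =>
    rw [Finset.sum_range_succ, Finset.sum_Icc_succ_top (by omega : 1 ≤ n + 1), ih]

/-- As `n → ∞`, the sum `∑ 1/((r+ℓ)(ℓ+s))` over integers `r ≥ 0`, `ℓ ≥ 1`, `s ≥ 0`
with `r + ℓ + s ≤ n` is asymptotically equivalent to `(π²/6)·n`. -/
theorem sum_inv_rl_ls_triple_asymptotic :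
    Tendsto (fun n : ℕ =>
      (∑ p ∈ (Finset.range (n + 1) ×ˢ Finset.Icc 1 n ×ˢ Finset.range (n + 1)).filter
          (fun p : ℕ × ℕ × ℕ => p.1 + p.2.1 + p.2.2 ≤ n),
        1 / (((p.1 : ℝ) + p.2.1) * ((p.2.1 : ℝ) + p.2.2)))
        / ((Real.pi ^ 2 / 6) * (n : ℝ)))
      atTop (nhds 1) := by
  have hc : (0 : ℝ) < Real.pi ^ 2 / 6 := by positivity
  have hu : Tendsto (fun i : ℕ => H2 (i + 1)) atTop (nhds (Real.pi ^ 2 / 6)) :=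
    H2_tendsto.comp (tendsto_add_atTop_nat 1)
  have h3 := hu.cesaro
  have h4 : Tendsto (fun n : ℕ => (∑ m ∈ Finset.Icc 1 n, H2 m) / (n : ℝ)) atTop
      (nhds (Real.pi ^ 2 / 6)) := by
    refine h3.congr fun n => ?_
    rw [Icc_sum_eq_range, div_eq_inv_mul]
  have final := h4.div_const (Real.pi ^ 2 / 6)
  rw [div_self hc.ne'] at final
  refine final.congr fun n => ?_
  rw [S_eq, div_div, mul_comm]
end

section
/- The Lebesgue integral of 1/((u+v)(u+w)) over the open simplex {(u,v,w) ∈ ℝ³ : u > 0, v > 0, w > 0, u + v + w ≤ 1} equals π²/6. -/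
/-!
Integrating out `w` leaves `(log (1 - v) - log u) / (u + v)`. After the substitution `s = u + v`,
integrating over `u ∈ (0, s)` first leaves `∫₀¹ H(s) / s ds`, where `H` is the binary entropy.
Since `H(s) / s - log (1 - s) = -log (1 - s) / s - log s` and both logarithms integrate to `-1`
over `(0, 1)`, this is `∫₀¹ -log (1 - s) / s ds = ∑ 1 / (n + 1)² = π² / 6`, by integrating the
power series of `-log (1 - s)` termwise. All integrals are taken in `ℝ≥0∞`, so Tonelli and the
termwise integration need no integrability arguments.
-/

open MeasureTheory Real Set Function
open scoped ENNReal

theorem setLIntegral_prod_eq_of_mem_iff {α β : Type*} [MeasurableSpace α] [MeasurableSpace β]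
    {μ : Measure α} {ν : Measure β} [SFinite ν] {s : Set (α × β)} {A : Set α} {B : α → Set β}
    (hs : MeasurableSet s) (hA : MeasurableSet A) (hB : ∀ x, MeasurableSet (B x))
    (hmem : ∀ x y, (x, y) ∈ s ↔ x ∈ A ∧ y ∈ B x) {f : α × β → ℝ≥0∞} (hf : Measurable f) :
    ∫⁻ p in s, f p ∂μ.prod ν = ∫⁻ x in A, ∫⁻ y in B x, f (x, y) ∂ν ∂μ := by
  rw [← lintegral_indicator hs, lintegral_prod _ (hf.indicator hs).aemeasurable,
    ← lintegral_indicator hA]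
  refine lintegral_congr fun x => ?_
  by_cases hx : x ∈ A
  · rw [indicator_of_mem hx, ← lintegral_indicator (hB x)]
    refine lintegral_congr fun y => ?_
    by_cases hy : y ∈ B x <;> simp [hmem, hx, hy]
  · simp [hmem, hx]

theorem lintegral_Ioo_Ioo_swap {K : ℝ → ℝ → ℝ≥0∞} (hK : Measurable (uncurry K)) (a b : ℝ) :
    ∫⁻ u in Ioo a b, ∫⁻ s in Ioo u b, K u s = ∫⁻ s in Ioo a b, ∫⁻ u in Ioo a s, K u s := by
  set T : Set (ℝ × ℝ) := {p | a < p.1 ∧ p.1 < p.2 ∧ p.2 < b}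
  have hT : MeasurableSet T := by unfold T; measurability
  calc ∫⁻ u in Ioo a b, ∫⁻ s in Ioo u b, K u s
      = ∫⁻ p in T, uncurry K p ∂(volume.prod volume) :=
        (setLIntegral_prod_eq_of_mem_iff hT measurableSet_Ioo (fun _ => measurableSet_Ioo)
          (fun u s => ⟨fun ⟨h₁, h₂, h₃⟩ => ⟨⟨h₁, h₂.trans h₃⟩, h₂, h₃⟩,
            fun ⟨⟨h₁, _⟩, h₂, h₃⟩ => ⟨h₁, h₂, h₃⟩⟩) hK).symm
    _ = ∫⁻ q in Prod.swap ⁻¹' T, uncurry K q.swap ∂(volume.prod volume) :=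
        (Measure.measurePreserving_swap.setLIntegral_comp_preimage hT hK).symm
    _ = ∫⁻ s in Ioo a b, ∫⁻ u in Ioo a s, K u s :=
        setLIntegral_prod_eq_of_mem_iff (hT.preimage measurable_swap) measurableSet_Ioo
          (fun _ => measurableSet_Ioo)
          (fun s u => ⟨fun ⟨h₁, h₂, h₃⟩ => ⟨⟨h₁.trans h₂, h₃⟩, h₁, h₂⟩,
            fun ⟨⟨_, h₃⟩, h₁, h₂⟩ => ⟨h₁, h₂, h₃⟩⟩) (hK.comp measurable_swap)

theorem setLIntegral_Ioo_comp_sub_right (G : ℝ → ℝ≥0∞) (a b c : ℝ) :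
    ∫⁻ s in Ioo (a + c) (b + c), G (s - c) = ∫⁻ v in Ioo a b, G v := by
  rw [← preimage_sub_const_Ioo]
  exact (measurePreserving_sub_right volume c).setLIntegral_comp_preimage_emb
    (measurableEmbedding_subRight c) G _

theorem setLIntegral_Ioo_ofReal_eq_intervalIntegral {f : ℝ → ℝ} {a b : ℝ} (hab : a ≤ b)
    (hf : IntervalIntegrable f volume a b) (hf_nonneg : ∀ x ∈ Ioo a b, 0 ≤ f x) :
    ∫⁻ x in Ioo a b, ENNReal.ofReal (f x) = ENNReal.ofReal (∫ x in a..b, f x) := by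
  rw [intervalIntegral.integral_of_le hab, integral_Ioc_eq_integral_Ioo,
    ofReal_integral_eq_lintegral_ofReal ((hf.1).mono_set Ioo_subset_Ioc_self)
      ((ae_restrict_iff' measurableSet_Ioo).2 (ae_of_all _ hf_nonneg))]

theorem integral_inv_add_of_pos {a c : ℝ} (ha : 0 < a) (hc : 0 ≤ c) :
    ∫ x in (0 : ℝ)..c, (a + x)⁻¹ = log (a + c) - log a := by
  rw [intervalIntegral.integral_comp_add_left (fun x => x⁻¹) a, add_zero,
    integral_inv (by rw [uIcc_of_le (by linarith)]; exact fun h => (h.1.trans_lt' ha).ne' rfl),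
    log_div (by positivity) ha.ne']

theorem setLIntegral_Ioc_one_div_mul_add {a b c : ℝ} (ha : 0 < a) (hb : 0 < b) (hc : 0 ≤ c) :
    ∫⁻ w in Ioc 0 c, ENNReal.ofReal (1 / (b * (a + w)))
      = ENNReal.ofReal ((log (a + c) - log a) / b) := by
  have hcont : ContinuousOn (fun w => 1 / (b * (a + w))) (uIcc 0 c) := by
    rw [uIcc_of_le hc]
    exact continuousOn_const.div (by fun_prop) fun w hw => by nlinarith [hw.1]
  rw [← setLIntegral_congr Ioo_ae_eq_Ioc, setLIntegral_Ioo_ofReal_eq_intervalIntegral hc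
    hcont.intervalIntegrable fun w hw => by have := hw.1; positivity]
  simp_rw [one_div, mul_inv]
  rw [intervalIntegral.integral_const_mul, integral_inv_add_of_pos ha hc, div_eq_inv_mul]

theorem setLIntegral_Ioo_log_sub_log_div {s : ℝ} (hs₀ : 0 < s) (hs₁ : s < 1) :
    ∫⁻ u in Ioo 0 s, ENNReal.ofReal ((log (1 - s + u) - log u) / s)
      = ENNReal.ofReal (binEntropy s / s) := by
  have hcont : ContinuousOn (fun u => log (1 - s + u)) (uIcc 0 s) := by
    rw [uIcc_of_le hs₀.le]
    exact ContinuousOn.log (by fun_prop) fun u hu => by linarith [hu.1]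
  rw [setLIntegral_Ioo_ofReal_eq_intervalIntegral hs₀.le
    ((hcont.intervalIntegrable.sub intervalIntegral.intervalIntegrable_log').div_const s)
    fun u hu => div_nonneg (sub_nonneg.2 (log_le_log hu.1 (by linarith))) hs₀.le]
  rw [intervalIntegral.integral_div, intervalIntegral.integral_sub hcont.intervalIntegrable
    intervalIntegral.intervalIntegrable_log', intervalIntegral.integral_comp_add_left log,
    integral_log, integral_log, add_zero, sub_add_cancel, log_one]
  congr 1
  simp only [binEntropy, log_inv]
  ring

theorem setLIntegral_Ioo_neg_log : ∫⁻ s in Ioo 0 1, ENNReal.ofReal (-log s) = 1 := by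
  rw [setLIntegral_Ioo_ofReal_eq_intervalIntegral (f := fun s => -log s) zero_le_one
    intervalIntegral.intervalIntegrable_log'.neg
    fun s hs => neg_nonneg.2 (log_nonpos hs.1.le hs.2.le)]
  simp

theorem setLIntegral_Ioo_neg_log_one_sub :
    ∫⁻ s in Ioo 0 1, ENNReal.ofReal (-log (1 - s)) = 1 := by
  have hint : IntervalIntegrable (fun s => log (1 - s)) volume 0 1 := by
    simpa using (intervalIntegral.intervalIntegrable_log' (a := 1) (b := 0)).comp_sub_left 1
  rw [setLIntegral_Ioo_ofReal_eq_intervalIntegral (f := fun s => -log (1 - s)) zero_le_one hint.neg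
    fun s hs => neg_nonneg.2 (log_nonpos (by linarith [hs.2]) (by linarith [hs.1]))]
  simp [intervalIntegral.integral_comp_sub_left log]

theorem hasSum_one_div_succ_sq : HasSum (fun n : ℕ => 1 / ((n : ℝ) + 1) ^ 2) (π ^ 2 / 6) := by
  simpa using (hasSum_nat_add_iff' (f := fun n : ℕ => 1 / (n : ℝ) ^ 2) 1).2 hasSum_zeta_two

theorem hasSum_pow_div_succ {s : ℝ} (hs₀ : 0 < s) (hs₁ : s < 1) :
    HasSum (fun n : ℕ => s ^ n / (n + 1)) (-log (1 - s) / s) := by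
  have hlog := hasSum_pow_div_log_of_abs_lt_one (abs_lt.2 ⟨by linarith, hs₁⟩)
  refine (hlog.div_const s).congr_fun fun n => ?_
  rw [pow_succ]
  field_simp

theorem setLIntegral_Ioo_neg_log_one_sub_div :
    ∫⁻ s in Ioo 0 1, ENNReal.ofReal (-log (1 - s) / s) = ENNReal.ofReal (π ^ 2 / 6) := by
  have hterm (n : ℕ) :
      ∫⁻ s in Ioo 0 1, ENNReal.ofReal (s ^ n / (n + 1))
        = ENNReal.ofReal (1 / ((n : ℝ) + 1) ^ 2) := by
    rw [setLIntegral_Ioo_ofReal_eq_intervalIntegral zero_le_one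
      ((by fun_prop : Continuous fun s : ℝ => s ^ n / (n + 1)).intervalIntegrable 0 1)
      fun s hs => by have := hs.1; positivity]
    rw [intervalIntegral.integral_div, integral_pow]
    congr 1
    field_simp
    simp
  calc ∫⁻ s in Ioo 0 1, ENNReal.ofReal (-log (1 - s) / s)
      = ∫⁻ s in Ioo 0 1, ∑' n : ℕ, ENNReal.ofReal (s ^ n / (n + 1)) := by
        refine setLIntegral_congr_fun measurableSet_Ioo fun s hs => ?_
        rw [← (hasSum_pow_div_succ hs.1 hs.2).tsum_eq,
          ENNReal.ofReal_tsum_of_nonneg (fun n => by have := hs.1; positivity)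
            (hasSum_pow_div_succ hs.1 hs.2).summable]
    _ = ENNReal.ofReal (π ^ 2 / 6) := by
        rw [lintegral_tsum fun n => by fun_prop, tsum_congr hterm,
          ← hasSum_one_div_succ_sq.tsum_eq,
          ENNReal.ofReal_tsum_of_nonneg (fun n => by positivity) hasSum_one_div_succ_sq.summable]

theorem setLIntegral_Ioo_binEntropy_div :
    ∫⁻ s in Ioo 0 1, ENNReal.ofReal (binEntropy s / s) = ENNReal.ofReal (π ^ 2 / 6) := by
  -- add `∫ -log (1 - s) = 1` to both sides and cancel it
  have hsplit : ∀ s ∈ Ioo (0 : ℝ) 1,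
      ENNReal.ofReal (binEntropy s / s) + ENNReal.ofReal (-log (1 - s))
        = ENNReal.ofReal (-log (1 - s) / s) + ENNReal.ofReal (-log s) := by
    rintro s ⟨hs₀, hs₁⟩
    have h₁ : log (1 - s) ≤ 0 := log_nonpos (by linarith) (by linarith)
    have h₂ : log s ≤ 0 := log_nonpos hs₀.le hs₁.le
    rw [← ENNReal.ofReal_add (div_nonneg (binEntropy_nonneg hs₀.le hs₁.le) hs₀.le)
        (by linarith),
      ← ENNReal.ofReal_add (div_nonneg (by linarith) hs₀.le) (by linarith)]
    congr 1
    simp only [binEntropy, log_inv]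
    field_simp
    ring
  rw [← ENNReal.add_left_inj ENNReal.one_ne_top, ← setLIntegral_Ioo_neg_log_one_sub,
    ← lintegral_add_right _ (by fun_prop), setLIntegral_congr_fun measurableSet_Ioo hsplit,
    lintegral_add_right _ (by fun_prop), setLIntegral_Ioo_neg_log_one_sub_div,
    setLIntegral_Ioo_neg_log, setLIntegral_Ioo_neg_log_one_sub]

theorem setLIntegral_simplex {f : ℝ × ℝ × ℝ → ℝ≥0∞} (hf : Measurable f) :
    ∫⁻ p in {p : ℝ × ℝ × ℝ | 0 < p.1 ∧ 0 < p.2.1 ∧ 0 < p.2.2 ∧ p.1 + p.2.1 + p.2.2 ≤ 1}, f p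
      = ∫⁻ u in Ioo 0 1, ∫⁻ v in Ioo 0 (1 - u), ∫⁻ w in Ioc 0 (1 - u - v), f (u, v, w) := by
  rw [Measure.volume_eq_prod, setLIntegral_prod_eq_of_mem_iff (by measurability)
    (A := Ioo 0 1) measurableSet_Ioo
    (B := fun u => {q : ℝ × ℝ | 0 < q.1 ∧ 0 < q.2 ∧ u + q.1 + q.2 ≤ 1})
    (fun u => by measurability)
    (fun u q => by exact ⟨fun ⟨h₁, h₂, h₃, h₄⟩ => ⟨⟨h₁, by linarith⟩, h₂, h₃, h₄⟩,
      fun ⟨⟨h₁, _⟩, h₂, h₃, h₄⟩ => ⟨h₁, h₂, h₃, h₄⟩⟩) hf]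
  refine lintegral_congr fun u => ?_
  rw [Measure.volume_eq_prod]
  exact setLIntegral_prod_eq_of_mem_iff (by measurability) measurableSet_Ioo
    (fun _ => measurableSet_Ioc)
    (fun v w => by exact ⟨fun ⟨h₁, h₂, h₃⟩ => ⟨⟨h₁, by linarith⟩, h₂, by linarith⟩,
      fun ⟨⟨h₁, _⟩, h₂, h₃⟩ => ⟨h₁, h₂, by linarith⟩⟩) (hf.comp measurable_prodMk_left)

theorem setLIntegral_simplex_fiber {u : ℝ} (hu : 0 < u) :
    ∫⁻ v in Ioo 0 (1 - u), ∫⁻ w in Ioc 0 (1 - u - v), ENNReal.ofReal (1 / ((u + v) * (u + w)))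
      = ∫⁻ s in Ioo u 1, ENNReal.ofReal ((log (1 - s + u) - log u) / s) := by
  rw [setLIntegral_congr_fun measurableSet_Ioo fun v hv =>
    setLIntegral_Ioc_one_div_mul_add hu (by linarith [hv.1]) (by linarith [hv.2])]
  have hshift := setLIntegral_Ioo_comp_sub_right
    (fun v => ENNReal.ofReal ((log (u + (1 - u - v)) - log u) / (u + v))) 0 (1 - u) u
  rw [zero_add, sub_add_cancel] at hshift
  rw [← hshift]
  refine lintegral_congr fun s => ?_
  rw [show u + (1 - u - (s - u)) = 1 - s + u by ring, add_sub_cancel]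

/-- The Lebesgue integral of `1/((u+v)(u+w))` over the open simplex
`{(u,v,w) : u > 0, v > 0, w > 0, u + v + w ≤ 1}` equals `π²/6`. -/
theorem integral_simplex_inv_uv_uw :
    ∫ p in {p : ℝ × ℝ × ℝ |
        0 < p.1 ∧ 0 < p.2.1 ∧ 0 < p.2.2 ∧ p.1 + p.2.1 + p.2.2 ≤ 1},
      1 / ((p.1 + p.2.1) * (p.1 + p.2.2)) = Real.pi ^ 2 / 6 := by
  have hf : Measurable fun p : ℝ × ℝ × ℝ => 1 / ((p.1 + p.2.1) * (p.1 + p.2.2)) := by fun_prop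
  have hK : Measurable (uncurry fun u s : ℝ => ENNReal.ofReal ((log (1 - s + u) - log u) / s)) :=
    by fun_prop
  rw [integral_eq_lintegral_of_nonneg_ae ?_ hf.aestronglyMeasurable,
    setLIntegral_simplex hf.ennreal_ofReal,
    setLIntegral_congr_fun measurableSet_Ioo fun u hu => setLIntegral_simplex_fiber hu.1,
    lintegral_Ioo_Ioo_swap hK,
    setLIntegral_congr_fun measurableSet_Ioo fun s hs =>
      setLIntegral_Ioo_log_sub_log_div hs.1 hs.2,
    setLIntegral_Ioo_binEntropy_div, ENNReal.toReal_ofReal (by positivity)]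
  refine ae_restrict_of_forall_mem (by measurability) fun p ⟨h₁, h₂, h₃, _⟩ => ?_
  positivity
end

section
/- As n → ∞, the sum ∑ 1/(rℓ + rs + sℓ), taken over all integers k₁ ≥ 1, r ≥ 1, ℓ ≥ 1, s ≥ 1 with k₁ + r + ℓ + s ≤ n, is asymptotically equivalent to J·n², where J := ∫_{[0,1]³} (1 − (u+v+w))·𝟙_{u+v+w ≤ 1} / (uv + uw + vw) du dv dw. -/
open Filter Finset MeasureTheory
open scoped Topology

/-!
Summing out `k₁` turns the sum into `∑_{r,ℓ,s ≥ 1} (n - r - ℓ - s)₊ / (rℓ + rs + sℓ)`, which is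
`n²` times the Riemann sum `n⁻³ ∑_{q ∈ [1,n]³} g(q/n)` of the integrand `g` of `J`, sampled at the
upper corners of the grid cubes of side `1/n`. On the positive orthant `g` is nonnegative and
antitone in each coordinate, so comparing `g(q/n)` with `g` on the grid cube below and above `q/n`
squeezes the Riemann sum between `∫_{(1/n,1]³} g` and `∫_{(0,1]³} g`. Both tend to `J`, because
AM-GM on `uv, uw, vw` gives `g ≤ (uvw)^(-2/3)`, so `g` is integrable. Since `J` dominates every
Riemann sum, `J > 0`, and dividing by `J` gives the limit `1`.
-/

def gridCell (n k : ℕ) : Set ℝ := Set.Ioc ((k : ℝ) / n) (((k + 1 : ℕ) : ℝ) / n)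

def gridCube (n : ℕ) (q : ℕ × ℕ × ℕ) : Set (ℝ × ℝ × ℝ) :=
  gridCell n q.1 ×ˢ gridCell n q.2.1 ×ˢ gridCell n q.2.2

noncomputable def gridPoint (n : ℕ) (q : ℕ × ℕ × ℕ) : ℝ × ℝ × ℝ := (q.1 / n, q.2.1 / n, q.2.2 / n)

def cubeIoc (a b : ℝ) : Set (ℝ × ℝ × ℝ) := Set.Ioc a b ×ˢ Set.Ioc a b ×ˢ Set.Ioc a b

def positiveOrthant : Set (ℝ × ℝ × ℝ) := Set.Ioi 0 ×ˢ Set.Ioi 0 ×ˢ Set.Ioi 0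

lemma biUnion_gridCell (n a b : ℕ) :
    ⋃ k ∈ Ico a b, gridCell n k = Set.Ioc ((a : ℝ) / n) ((b : ℝ) / n) := by
  simpa [gridCell] using (Nat.mono_cast.div_const n.cast_nonneg).biUnion_Ico_Ioc_map_succ a b

lemma pairwise_disjoint_gridCell (n : ℕ) : Pairwise (Function.onFun Disjoint (gridCell n)) := by
  unfold gridCell
  simpa using (Nat.mono_cast.div_const (n.cast_nonneg : (0 : ℝ) ≤ n)).pairwise_disjoint_on_Ioc_succ

lemma volume_gridCell (n k : ℕ) : volume (gridCell n k) = ENNReal.ofReal (n : ℝ)⁻¹ := by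
  rw [gridCell, Real.volume_Ioc]
  push_cast
  ring_nf

lemma biUnion_gridCube (n a b : ℕ) :
    ⋃ q ∈ Ico a b ×ˢ Ico a b ×ˢ Ico a b, gridCube n q = cubeIoc ((a : ℝ) / n) ((b : ℝ) / n) := by
  ext x
  simp only [cubeIoc, gridCube, ← biUnion_gridCell n a b, Set.mem_iUnion, Set.mem_prod,
    mem_product, exists_prop, Prod.exists]
  aesop

lemma gridCube_subset_cubeIoc {n a b : ℕ} {q : ℕ × ℕ × ℕ}
    (hq : q ∈ Ico a b ×ˢ Ico a b ×ˢ Ico a b) :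
    gridCube n q ⊆ cubeIoc ((a : ℝ) / n) ((b : ℝ) / n) :=
  biUnion_gridCube n a b ▸ Set.subset_biUnion_of_mem (u := gridCube n) hq

lemma pairwise_disjoint_gridCube (n : ℕ) : Pairwise (Function.onFun Disjoint (gridCube n)) := by
  rintro ⟨a, b, c⟩ ⟨a', b', c'⟩ hne
  simp only [Function.onFun, gridCube, Set.disjoint_prod]
  by_cases ha : a = a'
  · by_cases hb : b = b'
    · exact .inr (.inr (pairwise_disjoint_gridCell n fun hc => hne (by subst ha hb hc; rfl)))
    · exact .inr (.inl (pairwise_disjoint_gridCell n hb))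
  · exact .inl (pairwise_disjoint_gridCell n ha)

lemma measurableSet_gridCube (n : ℕ) (q : ℕ × ℕ × ℕ) : MeasurableSet (gridCube n q) :=
  measurableSet_Ioc.prod (measurableSet_Ioc.prod measurableSet_Ioc)

lemma volume_gridCube (n : ℕ) (q : ℕ × ℕ × ℕ) :
    volume (gridCube n q) = ENNReal.ofReal (n ^ 3 : ℝ)⁻¹ := by
  simp only [gridCube, Measure.volume_eq_prod, Measure.prod_prod, volume_gridCell]
  rw [← ENNReal.ofReal_mul (by positivity), ← ENNReal.ofReal_mul (by positivity)]
  ring_nf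

lemma measureReal_gridCube (n : ℕ) (q : ℕ × ℕ × ℕ) :
    volume.real (gridCube n q) = (n ^ 3 : ℝ)⁻¹ := by
  rw [Measure.real, volume_gridCube, ENNReal.toReal_ofReal (by positivity)]

lemma measurableSet_cubeIoc (a b : ℝ) : MeasurableSet (cubeIoc a b) :=
  measurableSet_Ioc.prod (measurableSet_Ioc.prod measurableSet_Ioc)

lemma cubeIoc_subset_cubeIoc {a b a' b' : ℝ} (ha : a ≤ a') (hb : b' ≤ b) :
    cubeIoc a' b' ⊆ cubeIoc a b :=
  have h := Set.Ioc_subset_Ioc ha hb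
  Set.prod_mono h (Set.prod_mono h h)

lemma cubeIoc_subset_positiveOrthant (b : ℝ) : cubeIoc 0 b ⊆ positiveOrthant :=
  Set.prod_mono Set.Ioc_subset_Ioi_self
    (Set.prod_mono Set.Ioc_subset_Ioi_self Set.Ioc_subset_Ioi_self)

lemma gridCube_subset_positiveOrthant (n : ℕ) (q : ℕ × ℕ × ℕ) :
    gridCube n q ⊆ positiveOrthant := by
  have hcell (k : ℕ) : gridCell n k ⊆ Set.Ioi 0 := fun x hx =>
    lt_of_le_of_lt (by positivity) hx.1
  exact Set.prod_mono (hcell _) (Set.prod_mono (hcell _) (hcell _))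

lemma one_le_of_mem_product {s : Finset ℕ} (hs : ∀ k ∈ s, 1 ≤ k) {q : ℕ × ℕ × ℕ}
    (hq : q ∈ s ×ˢ s ×ˢ s) : 1 ≤ q := by
  simp only [mem_product] at hq
  exact ⟨hs _ hq.1, hs _ hq.2.1, hs _ hq.2.2⟩

lemma gridPoint_mem_positiveOrthant {n : ℕ} (hn : 0 < n) {q : ℕ × ℕ × ℕ} (hq : 1 ≤ q) :
    gridPoint n q ∈ positiveOrthant := by
  obtain ⟨h1, h2, h3⟩ : 1 ≤ q.1 ∧ 1 ≤ q.2.1 ∧ 1 ≤ q.2.2 := hq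
  simp only [gridPoint, positiveOrthant, Set.mem_prod, Set.mem_Ioi]
  refine ⟨?_, ?_, ?_⟩ <;> positivity

lemma gridPoint_le_of_mem_gridCube {n : ℕ} {q : ℕ × ℕ × ℕ} {x : ℝ × ℝ × ℝ}
    (hx : x ∈ gridCube n q) : gridPoint n q ≤ x :=
  ⟨hx.1.1.le, hx.2.1.1.le, hx.2.2.1.le⟩

lemma le_gridPoint_add_one_of_mem_gridCube {n : ℕ} {q : ℕ × ℕ × ℕ} {x : ℝ × ℝ × ℝ}
    (hx : x ∈ gridCube n q) : x ≤ gridPoint n (q + 1) :=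
  ⟨hx.1.2, hx.2.1.2, hx.2.2.2⟩

lemma setIntegral_cubeIoc_eq_sum {g : ℝ × ℝ × ℝ → ℝ} (n a b : ℕ)
    (hint : IntegrableOn g (cubeIoc ((a : ℝ) / n) ((b : ℝ) / n))) :
    ∫ x in cubeIoc ((a : ℝ) / n) ((b : ℝ) / n), g x
      = ∑ q ∈ Ico a b ×ˢ Ico a b ×ˢ Ico a b, ∫ x in gridCube n q, g x := by
  rw [← biUnion_gridCube]
  exact integral_biUnion_finset _ (fun q _ => measurableSet_gridCube n q)
    ((pairwise_disjoint_gridCube n).set_pairwise _)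
    (fun q hq => hint.mono_set (gridCube_subset_cubeIoc hq))

noncomputable def riemannSum (g : ℝ × ℝ × ℝ → ℝ) (n : ℕ) : ℝ :=
  ∑ q ∈ Icc 1 n ×ˢ Icc 1 n ×ˢ Icc 1 n, g (gridPoint n q) / n ^ 3

lemma riemannSum_eq_sum_Ico (g : ℝ × ℝ × ℝ → ℝ) (n : ℕ) :
    riemannSum g n = ∑ q ∈ Ico 0 n ×ˢ Ico 0 n ×ˢ Ico 0 n, g (gridPoint n (q + 1)) / n ^ 3 := by
  refine (sum_nbij' (· + 1) (· - 1) ?_ ?_ ?_ ?_ fun _ _ => rfl).symm <;>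
    simp only [mem_product, mem_Ico, mem_Icc, Prod.ext_iff, Prod.fst_add, Prod.snd_add,
      Prod.fst_sub, Prod.snd_sub, Prod.fst_one, Prod.snd_one] <;> omega

lemma iUnion_cubeIoc_one_div_add_one (b : ℝ) :
    ⋃ k : ℕ, cubeIoc (1 / (k + 1)) b = cubeIoc 0 b := by
  refine Set.Subset.antisymm
    (Set.iUnion_subset fun k => cubeIoc_subset_cubeIoc (by positivity) le_rfl) ?_
  rintro ⟨x, y, z⟩ ⟨hx, hy, hz⟩
  obtain ⟨k, hk⟩ := exists_nat_one_div_lt (lt_min hx.1 (lt_min hy.1 hz.1))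
  exact Set.mem_iUnion.2 ⟨k, ⟨hk.trans_le (min_le_left _ _), hx.2⟩,
    ⟨hk.trans_le ((min_le_right _ _).trans (min_le_left _ _)), hy.2⟩,
    ⟨hk.trans_le ((min_le_right _ _).trans (min_le_right _ _)), hz.2⟩⟩

lemma tendsto_setIntegral_cubeIoc_one_div {g : ℝ × ℝ × ℝ → ℝ}
    (hint : IntegrableOn g (cubeIoc 0 1)) :
    Tendsto (fun n : ℕ => ∫ x in cubeIoc (1 / n) 1, g x) atTop (𝓝 (∫ x in cubeIoc 0 1, g x)) := by
  have hmono : Monotone fun k : ℕ => cubeIoc (1 / ((k : ℝ) + 1)) 1 := fun k l hkl =>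
    cubeIoc_subset_cubeIoc (by gcongr) le_rfl
  have := tendsto_setIntegral_of_monotone (fun k => measurableSet_cubeIoc _ _) hmono
    ((iUnion_cubeIoc_one_div_add_one 1).symm ▸ hint)
  rw [iUnion_cubeIoc_one_div_add_one] at this
  exact (tendsto_add_atTop_iff_nat 1).1 (by simpa using this)

section Antitone

variable {g : ℝ × ℝ × ℝ → ℝ} {n : ℕ}

lemma le_setIntegral_gridCube (hg : AntitoneOn g positiveOrthant) (hn : 0 < n)
    {q : ℕ × ℕ × ℕ} (hint : IntegrableOn g (gridCube n q)) :
    g (gridPoint n (q + 1)) / n ^ 3 ≤ ∫ x in gridCube n q, g x := by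
  have hbound : ∀ x ∈ gridCube n q, g (gridPoint n (q + 1)) ≤ g x := fun x hx =>
    hg (gridCube_subset_positiveOrthant n q hx)
      (gridPoint_mem_positiveOrthant hn le_add_self) (le_gridPoint_add_one_of_mem_gridCube hx)
  have := setIntegral_ge_of_const_le_real (measurableSet_gridCube n q)
    (by simp [volume_gridCube]) hbound hint
  rwa [measureReal_gridCube, ← div_eq_mul_inv] at this

lemma setIntegral_gridCube_le (hg : AntitoneOn g positiveOrthant) (hn : 0 < n)
    {q : ℕ × ℕ × ℕ} (hq : 1 ≤ q) (hint : IntegrableOn g (gridCube n q)) :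
    ∫ x in gridCube n q, g x ≤ g (gridPoint n q) / n ^ 3 := by
  have hbound : ∀ x ∈ gridCube n q, g x ≤ g (gridPoint n q) := fun x hx =>
    hg (gridPoint_mem_positiveOrthant hn hq) (gridCube_subset_positiveOrthant n q hx)
      (gridPoint_le_of_mem_gridCube hx)
  calc ∫ x in gridCube n q, g x ≤ ∫ _ in gridCube n q, g (gridPoint n q) :=
        setIntegral_mono_on hint (integrableOn_const (by simp [volume_gridCube]))
          (measurableSet_gridCube n q) hbound
    _ = g (gridPoint n q) / n ^ 3 := by
        rw [setIntegral_const, measureReal_gridCube, smul_eq_mul, div_eq_inv_mul]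

lemma riemannSum_le_setIntegral (hg : AntitoneOn g positiveOrthant)
    (hint : IntegrableOn g (cubeIoc 0 1)) (hn : 0 < n) :
    riemannSum g n ≤ ∫ x in cubeIoc 0 1, g x := by
  have hcube : cubeIoc 0 1 = cubeIoc (((0 : ℕ) : ℝ) / n) ((n : ℝ) / n) := by
    simp [hn.ne']
  rw [hcube] at hint ⊢
  rw [riemannSum_eq_sum_Ico, setIntegral_cubeIoc_eq_sum n 0 n hint]
  exact sum_le_sum fun q hq =>
    le_setIntegral_gridCube hg hn (hint.mono_set (gridCube_subset_cubeIoc hq))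

lemma setIntegral_le_riemannSum (hg : AntitoneOn g positiveOrthant)
    (h0 : ∀ x ∈ positiveOrthant, 0 ≤ g x) (hint : IntegrableOn g (cubeIoc 0 1)) (hn : 0 < n) :
    ∫ x in cubeIoc (1 / n) 1, g x ≤ riemannSum g n := by
  have hcube : cubeIoc (1 / n) 1 = cubeIoc (((1 : ℕ) : ℝ) / n) ((n : ℝ) / n) := by
    simp [hn.ne']
  have hint' : IntegrableOn g (cubeIoc (((1 : ℕ) : ℝ) / n) ((n : ℝ) / n)) :=
    hint.mono_set (hcube ▸ cubeIoc_subset_cubeIoc (by positivity) le_rfl)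
  rw [hcube, setIntegral_cubeIoc_eq_sum n 1 n hint']
  calc ∑ q ∈ Ico 1 n ×ˢ Ico 1 n ×ˢ Ico 1 n, ∫ x in gridCube n q, g x
      ≤ ∑ q ∈ Ico 1 n ×ˢ Ico 1 n ×ˢ Ico 1 n, g (gridPoint n q) / n ^ 3 :=
        sum_le_sum fun q hq => setIntegral_gridCube_le hg hn
          (one_le_of_mem_product (fun k hk => (mem_Ico.1 hk).1) hq)
          (hint'.mono_set (gridCube_subset_cubeIoc hq))
    _ ≤ riemannSum g n := by
        refine sum_le_sum_of_subset_of_nonneg (by gcongr <;> exact Ico_subset_Icc_self)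
          fun q hq _ => div_nonneg (h0 _ (gridPoint_mem_positiveOrthant hn ?_)) (by positivity)
        exact one_le_of_mem_product (fun k hk => (mem_Icc.1 hk).1) hq

theorem tendsto_riemannSum_of_antitoneOn (hg : AntitoneOn g positiveOrthant)
    (h0 : ∀ x ∈ positiveOrthant, 0 ≤ g x) (hint : IntegrableOn g (cubeIoc 0 1)) :
    Tendsto (riemannSum g) atTop (𝓝 (∫ x in cubeIoc 0 1, g x)) :=
  tendsto_of_tendsto_of_tendsto_of_le_of_le' (tendsto_setIntegral_cubeIoc_one_div hint)
    tendsto_const_nhds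
    (eventually_gt_atTop 0 |>.mono fun _ hn => setIntegral_le_riemannSum hg h0 hint hn)
    (eventually_gt_atTop 0 |>.mono fun _ hn => riemannSum_le_setIntegral hg hint hn)

end Antitone

lemma MeasureTheory.IntegrableOn.mul_prod₃ {α β γ L : Type*} [MeasurableSpace α]
    [MeasurableSpace β] [MeasurableSpace γ] [NormedRing L] {μ : Measure α} {ν : Measure β}
    {ρ : Measure γ} [SFinite μ] [SFinite ν] [SFinite ρ] {f₁ : α → L} {f₂ : β → L} {f₃ : γ → L}
    {s₁ : Set α} {s₂ : Set β} {s₃ : Set γ}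
    (h₁ : IntegrableOn f₁ s₁ μ) (h₂ : IntegrableOn f₂ s₂ ν) (h₃ : IntegrableOn f₃ s₃ ρ) :
    IntegrableOn (fun x : α × β × γ => f₁ x.1 * (f₂ x.2.1 * f₃ x.2.2)) (s₁ ×ˢ s₂ ×ˢ s₃)
      (μ.prod (ν.prod ρ)) := by
  have h₂₃ := h₂.mul_prod h₃
  rw [Measure.prod_restrict] at h₂₃
  have h := h₁.mul_prod h₂₃
  rwa [Measure.prod_restrict] at h

lemma three_mul_rpow_two_thirds_le {u v w : ℝ} (hu : 0 ≤ u) (hv : 0 ≤ v) (hw : 0 ≤ w) :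
    3 * (u * v * w) ^ (2 / 3 : ℝ) ≤ u * v + u * w + v * w := by
  have amgm := Real.geom_mean_le_arith_mean3_weighted (w₁ := 1 / 3) (w₂ := 1 / 3) (w₃ := 1 / 3)
    (p₁ := u * v) (p₂ := u * w) (p₃ := v * w) (by norm_num) (by norm_num) (by norm_num)
    (by positivity) (by positivity) (by positivity) (by norm_num)
  have hgeom : (u * v) ^ (1 / 3 : ℝ) * (u * w) ^ (1 / 3 : ℝ) * (v * w) ^ (1 / 3 : ℝ)
      = (u * v * w) ^ (2 / 3 : ℝ) := by
    rw [← Real.mul_rpow (by positivity) (by positivity),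
      ← Real.mul_rpow (by positivity) (by positivity),
      show (2 / 3 : ℝ) = (2 : ℕ) * (1 / 3) by norm_num, Real.rpow_natCast_mul (by positivity)]
    ring_nf
  linarith

noncomputable def jIntegrand (q : ℝ × ℝ × ℝ) : ℝ :=
  if q.1 + q.2.1 + q.2.2 ≤ 1 then
    (1 - (q.1 + q.2.1 + q.2.2)) / (q.1 * q.2.1 + q.1 * q.2.2 + q.2.1 * q.2.2)
  else 0

lemma measurable_jIntegrand : Measurable jIntegrand :=
  Measurable.ite (measurableSet_le (by fun_prop) measurable_const) (by fun_prop) measurable_const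

lemma jIntegrand_nonneg : ∀ x ∈ positiveOrthant, 0 ≤ jIntegrand x := by
  rintro ⟨u, v, w⟩ hx
  obtain ⟨hu, hv, hw⟩ : 0 < u ∧ 0 < v ∧ 0 < w := hx
  unfold jIntegrand
  split_ifs with h
  · exact div_nonneg (sub_nonneg.2 h) (by positivity)
  · exact le_rfl

lemma antitoneOn_jIntegrand : AntitoneOn jIntegrand positiveOrthant := by
  rintro ⟨u, v, w⟩ hx ⟨u', v', w'⟩ - ⟨huu, hvv, hww⟩
  obtain ⟨hu, hv, hw⟩ : 0 < u ∧ 0 < v ∧ 0 < w := hx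
  dsimp only at huu hvv hww
  by_cases hs' : u' + v' + w' ≤ 1
  · have hs : u + v + w ≤ 1 := by linarith
    simp only [jIntegrand, if_pos hs, if_pos hs']
    exact div_le_div₀ (by linarith) (by linarith) (by positivity) (by gcongr <;> linarith)
  · simp only [jIntegrand, if_neg hs']
    exact jIntegrand_nonneg (u, v, w) ⟨hu, hv, hw⟩

lemma jIntegrand_le_rpow {x : ℝ × ℝ × ℝ} (hx : x ∈ positiveOrthant) :
    jIntegrand x ≤ (x.1 * x.2.1 * x.2.2) ^ (-(2 / 3) : ℝ) := by
  obtain ⟨u, v, w⟩ := x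
  obtain ⟨hu, hv, hw⟩ : 0 < u ∧ 0 < v ∧ 0 < w := hx
  have hamgm := three_mul_rpow_two_thirds_le hu.le hv.le hw.le
  have hpow : 0 < (u * v * w) ^ (2 / 3 : ℝ) := by positivity
  unfold jIntegrand
  split_ifs
  · rw [Real.rpow_neg (by positivity), ← one_div]
    calc (1 - (u + v + w)) / (u * v + u * w + v * w) ≤ 1 / (u * v + u * w + v * w) := by
          gcongr; linarith
      _ ≤ 1 / (u * v * w) ^ (2 / 3 : ℝ) := by gcongr; linarith
  · positivity

lemma integrableOn_jIntegrand : IntegrableOn jIntegrand (cubeIoc 0 1) := by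
  have hrpow : IntegrableOn (fun t : ℝ => t ^ (-(2 / 3) : ℝ)) (Set.Ioc 0 1) := by
    rw [integrableOn_Ioc_iff_integrableOn_Ioo, intervalIntegral.integrableOn_Ioo_rpow_iff one_pos]
    norm_num
  have hdom : IntegrableOn (fun x : ℝ × ℝ × ℝ => (x.1 * x.2.1 * x.2.2) ^ (-(2 / 3) : ℝ))
      (cubeIoc 0 1) := by
    refine (hrpow.mul_prod₃ hrpow hrpow).congr_fun (fun x hx => ?_) (measurableSet_cubeIoc 0 1)
    obtain ⟨hu, hv, hw⟩ := hx
    rw [Real.mul_rpow (mul_nonneg hu.1.le hv.1.le) hw.1.le, Real.mul_rpow hu.1.le hv.1.le,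
      mul_assoc]
  refine hdom.mono' measurable_jIntegrand.aestronglyMeasurable
    ((ae_restrict_iff' (measurableSet_cubeIoc 0 1)).2 (ae_of_all _ fun x hx => ?_))
  have hpos : x ∈ positiveOrthant := cubeIoc_subset_positiveOrthant 1 hx
  rw [Real.norm_of_nonneg (jIntegrand_nonneg x hpos)]
  exact jIntegrand_le_rpow hpos

lemma jIntegrand_gridPoint {n : ℕ} (hn : 0 < n) {q : ℕ × ℕ × ℕ} (hq : 1 ≤ q) :
    jIntegrand (gridPoint n q) = n * ((n - (q.1 + q.2.1 + q.2.2) : ℕ) : ℝ)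
      / (q.1 * q.2.1 + q.1 * q.2.2 + q.2.1 * q.2.2) := by
  obtain ⟨a, b, c⟩ := q
  obtain ⟨ha, hb, hc⟩ : 1 ≤ a ∧ 1 ≤ b ∧ 1 ≤ c := hq
  have hn' : (0 : ℝ) < n := by exact_mod_cast hn
  have hsum : (a : ℝ) / n + b / n + c / n ≤ 1 ↔ a + b + c ≤ n := by
    rw [← add_div, ← add_div, div_le_one hn']
    exact_mod_cast Iff.rfl
  rw [jIntegrand, gridPoint]
  dsimp only
  by_cases h : a + b + c ≤ n
  · rw [if_pos (hsum.2 h), Nat.cast_sub h]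
    have : (0 : ℝ) < a * b + a * c + b * c := by positivity
    field_simp
    push_cast
    ring
  · rw [if_neg (hsum.not.2 h), Nat.sub_eq_zero_of_le (by omega : n ≤ a + b + c)]
    simp

lemma setIntegral_jIntegrand_pos : 0 < ∫ x in cubeIoc 0 1, jIntegrand x := by
  have hterm : jIntegrand (gridPoint 4 1) / 4 ^ 3 ≤ riemannSum jIntegrand 4 := by
    refine single_le_sum (f := fun q => jIntegrand (gridPoint 4 q) / (4 : ℕ) ^ 3)
      (fun q hq => div_nonneg (jIntegrand_nonneg _ (gridPoint_mem_positiveOrthant four_pos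
        (one_le_of_mem_product (fun k hk => (mem_Icc.1 hk).1) hq))) (by positivity)) (by decide)
  have hvalue : jIntegrand (gridPoint 4 1) = 4 / 3 := by
    norm_num [jIntegrand, gridPoint]
  linarith [riemannSum_le_setIntegral antitoneOn_jIntegrand integrableOn_jIntegrand four_pos]

lemma setIntegral_Icc_prod_eq_cubeIoc (f : ℝ × ℝ × ℝ → ℝ) (a b : ℝ) :
    ∫ x in Set.Icc a b ×ˢ Set.Icc a b ×ˢ Set.Icc a b, f x = ∫ x in cubeIoc a b, f x := by
  refine setIntegral_congr_set ?_
  simp only [cubeIoc, Measure.volume_eq_prod]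
  exact (Measure.set_prod_ae_eq Ioc_ae_eq_Icc
    (Measure.set_prod_ae_eq Ioc_ae_eq_Icc Ioc_ae_eq_Icc)).symm

lemma sum_filter_add_le_eq_sum_nsmul {M : Type*} [AddCommMonoid M] (n : ℕ)
    (f : ℕ × ℕ × ℕ → M) :
    ∑ p ∈ (Icc 1 n ×ˢ Icc 1 n ×ˢ Icc 1 n ×ˢ Icc 1 n).filter
        (fun p : ℕ × ℕ × ℕ × ℕ => p.1 + p.2.1 + p.2.2.1 + p.2.2.2 ≤ n), f p.2
      = ∑ q ∈ Icc 1 n ×ˢ Icc 1 n ×ˢ Icc 1 n, (n - (q.1 + q.2.1 + q.2.2)) • f q := by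
  rw [sum_filter, sum_product_right]
  refine sum_congr rfl fun q _ => ?_
  have hslice : (Icc 1 n).filter (fun k => k + q.1 + q.2.1 + q.2.2 ≤ n)
      = Icc 1 (n - (q.1 + q.2.1 + q.2.2)) := by
    ext k
    simp only [mem_filter, mem_Icc]
    omega
  simp only [← sum_filter, hslice, sum_const, Nat.card_Icc, Nat.add_sub_cancel]

lemma sum_eq_sq_mul_riemannSum {n : ℕ} (hn : 0 < n) :
    ∑ p ∈ (Icc 1 n ×ˢ Icc 1 n ×ˢ Icc 1 n ×ˢ Icc 1 n).filter
        (fun p : ℕ × ℕ × ℕ × ℕ => p.1 + p.2.1 + p.2.2.1 + p.2.2.2 ≤ n),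
      1 / ((p.2.1 : ℝ) * p.2.2.1 + (p.2.1 : ℝ) * p.2.2.2 + (p.2.2.2 : ℝ) * p.2.2.1)
      = n ^ 2 * riemannSum jIntegrand n := by
  rw [sum_filter_add_le_eq_sum_nsmul n
    (fun q => 1 / ((q.1 : ℝ) * q.2.1 + (q.1 : ℝ) * q.2.2 + (q.2.2 : ℝ) * q.2.1)),
    riemannSum, mul_sum]
  refine sum_congr rfl fun q hq => ?_
  rw [jIntegrand_gridPoint hn (one_le_of_mem_product (fun k hk => (mem_Icc.1 hk).1) hq),
    nsmul_eq_mul]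
  field_simp

/-- As `n → ∞`, the sum `∑ 1/(rℓ + rs + sℓ)` over integers `k₁, r, ℓ, s ≥ 1` with
`k₁ + r + ℓ + s ≤ n` is asymptotically equivalent to `J·n²`, where
`J = ∫_{[0,1]³} (1−(u+v+w))·𝟙_{u+v+w ≤ 1}/(uv+uw+vw)`. -/
theorem sum_inv_rl_rs_sl_asymptotic :
    Tendsto (fun n : ℕ =>
      (∑ p ∈ (Finset.Icc 1 n ×ˢ Finset.Icc 1 n ×ˢ
          Finset.Icc 1 n ×ˢ Finset.Icc 1 n).filter
          (fun p : ℕ × ℕ × ℕ × ℕ => p.1 + p.2.1 + p.2.2.1 + p.2.2.2 ≤ n),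
        1 / ((p.2.1 : ℝ) * p.2.2.1 + (p.2.1 : ℝ) * p.2.2.2 + (p.2.2.2 : ℝ) * p.2.2.1))
        / ((∫ q in (Set.Icc (0:ℝ) 1) ×ˢ (Set.Icc (0:ℝ) 1) ×ˢ (Set.Icc (0:ℝ) 1),
            (if q.1 + q.2.1 + q.2.2 ≤ 1 then
              (1 - (q.1 + q.2.1 + q.2.2)) / (q.1 * q.2.1 + q.1 * q.2.2 + q.2.1 * q.2.2)
            else 0)) * (n : ℝ) ^ 2))
      atTop (nhds 1) := by
  have hJ := setIntegral_jIntegrand_pos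
  have hR := (tendsto_riemannSum_of_antitoneOn antitoneOn_jIntegrand jIntegrand_nonneg
    integrableOn_jIntegrand).div_const (∫ x in cubeIoc 0 1, jIntegrand x)
  rw [div_self hJ.ne'] at hR
  refine hR.congr' ((eventually_gt_atTop 0).mono fun n hn => ?_)
  dsimp only
  rw [sum_eq_sq_mul_riemannSum hn, setIntegral_Icc_prod_eq_cubeIoc, mul_comm _ ((n : ℝ) ^ 2),
    mul_div_mul_left _ _ (by positivity)]
  rfl
end

section
/- The function (u,v,w) ↦ (1 − (u+v+w))·𝟙_{u+v+w ≤ 1} / (uv + uw + vw) is Lebesgue integrable on (0,1)³; in particular the constant J := ∫_{[0,1]³} (1 − (u+v+w))·𝟙_{u+v+w ≤ 1}/(uv + uw + vw) du dv dw is finite. -/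
open MeasureTheory

/-- AM–GM bound for the denominator. -/
lemma denom_lower_bound {u v w : ℝ} (hu : 0 < u) (hv : 0 < v) (hw : 0 < w) :
    3 * (u ^ (2/3 : ℝ) * v ^ (2/3 : ℝ) * w ^ (2/3 : ℝ)) ≤ u * v + u * w + v * w := by
  have h := Real.geom_mean_le_arith_mean3_weighted (by norm_num : (0:ℝ) ≤ 1/3)
    (by norm_num : (0:ℝ) ≤ 1/3) (by norm_num : (0:ℝ) ≤ 1/3)
    (mul_nonneg hu.le hv.le) (mul_nonneg hu.le hw.le) (mul_nonneg hv.le hw.le)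
    (by norm_num)
  have key : (u*v) ^ (1/3:ℝ) * (u*w) ^ (1/3:ℝ) * (v*w) ^ (1/3:ℝ)
      = u ^ (2/3:ℝ) * v ^ (2/3:ℝ) * w ^ (2/3:ℝ) := by
    rw [Real.mul_rpow hu.le hv.le, Real.mul_rpow hu.le hw.le, Real.mul_rpow hv.le hw.le,
      show (2/3:ℝ) = 1/3 + 1/3 by norm_num, Real.rpow_add hu, Real.rpow_add hv,
      Real.rpow_add hw]
    ring
  rw [key] at h
  nlinarith [h]

/-- The function `(u,v,w) ↦ (1 − (u+v+w))·𝟙_{u+v+w ≤ 1}/(uv + uw + vw)` is Lebesgue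
integrable on `(0,1)³`. -/
theorem integrableOn_J_integrand :
    IntegrableOn
      (fun p : ℝ × ℝ × ℝ =>
        if p.1 + p.2.1 + p.2.2 ≤ 1 then
          (1 - (p.1 + p.2.1 + p.2.2)) / (p.1 * p.2.1 + p.1 * p.2.2 + p.2.1 * p.2.2)
        else 0)
      ((Set.Ioo (0:ℝ) 1) ×ˢ (Set.Ioo (0:ℝ) 1) ×ˢ (Set.Ioo (0:ℝ) 1)) volume := by
  have h1 : IntegrableOn (fun x : ℝ => x ^ (-2/3 : ℝ)) (Set.Ioo 0 1) volume := by
    rw [intervalIntegral.integrableOn_Ioo_rpow_iff zero_lt_one]; norm_num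
  have h2 : Integrable (fun p : ℝ × ℝ => p.1 ^ (-2/3:ℝ) * p.2 ^ (-2/3:ℝ))
      ((volume.restrict (Set.Ioo (0:ℝ) 1)).prod (volume.restrict (Set.Ioo (0:ℝ) 1))) :=
    h1.mul_prod h1
  have h3 : Integrable
      (fun p : ℝ × ℝ × ℝ => p.1 ^ (-2/3:ℝ) * (p.2.1 ^ (-2/3:ℝ) * p.2.2 ^ (-2/3:ℝ)))
      ((volume.restrict (Set.Ioo (0:ℝ) 1)).prod
        ((volume.restrict (Set.Ioo (0:ℝ) 1)).prod (volume.restrict (Set.Ioo (0:ℝ) 1)))) :=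
    h1.mul_prod h2
  have hmeas : (volume.restrict (Set.Ioo (0:ℝ) 1)).prod
        ((volume.restrict (Set.Ioo (0:ℝ) 1)).prod (volume.restrict (Set.Ioo (0:ℝ) 1)))
      = volume.restrict ((Set.Ioo (0:ℝ) 1) ×ˢ (Set.Ioo (0:ℝ) 1) ×ˢ (Set.Ioo (0:ℝ) 1)) := by
    rw [Measure.prod_restrict, Measure.prod_restrict, ← Measure.volume_eq_prod,
      ← Measure.volume_eq_prod]
  rw [hmeas] at h3
  have hg : IntegrableOn
      (fun p : ℝ × ℝ × ℝ =>
        (1/3 : ℝ) * (p.1 ^ (-2/3:ℝ) * (p.2.1 ^ (-2/3:ℝ) * p.2.2 ^ (-2/3:ℝ))))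
      ((Set.Ioo (0:ℝ) 1) ×ˢ (Set.Ioo (0:ℝ) 1) ×ˢ (Set.Ioo (0:ℝ) 1)) volume :=
    h3.const_mul _
  apply hg.mono'
  · -- a.e. strong measurability
    apply AEStronglyMeasurable.restrict
    apply Measurable.aestronglyMeasurable
    apply Measurable.ite
    · exact measurableSet_le (by fun_prop) measurable_const
    · fun_prop
    · fun_prop
  · filter_upwards [ae_restrict_mem
      (((measurableSet_Ioo).prod ((measurableSet_Ioo).prod measurableSet_Ioo)))] with p hp
    obtain ⟨hu, hv, hw⟩ := hp
    set u := p.1; set v := p.2.1; set w := p.2.2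
    have hden : 0 < u * v + u * w + v * w := by
      have := mul_pos hu.1 hv.1; have := mul_pos hu.1 hw.1; have := mul_pos hv.1 hw.1
      linarith
    have hpow : 0 < u ^ (2/3:ℝ) * v ^ (2/3:ℝ) * w ^ (2/3:ℝ) :=
      mul_pos (mul_pos (Real.rpow_pos_of_pos hu.1 _) (Real.rpow_pos_of_pos hv.1 _))
        (Real.rpow_pos_of_pos hw.1 _)
    have hRHS : (1/3 : ℝ) * (u ^ (-2/3:ℝ) * (v ^ (-2/3:ℝ) * w ^ (-2/3:ℝ)))
        = 1 / (3 * (u ^ (2/3:ℝ) * v ^ (2/3:ℝ) * w ^ (2/3:ℝ))) := by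
      rw [show (-2/3:ℝ) = -(2/3) by norm_num, Real.rpow_neg hu.1.le, Real.rpow_neg hv.1.le,
        Real.rpow_neg hw.1.le]
      have ha := (Real.rpow_pos_of_pos hu.1 (2/3:ℝ)).ne'
      have hb := (Real.rpow_pos_of_pos hv.1 (2/3:ℝ)).ne'
      have hc := (Real.rpow_pos_of_pos hw.1 (2/3:ℝ)).ne'
      field_simp
    by_cases hs : u + v + w ≤ 1
    · rw [if_pos hs]
      have hnum : 0 ≤ 1 - (u + v + w) := by linarith
      rw [Real.norm_eq_abs, abs_of_nonneg (div_nonneg hnum hden.le), hRHS]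
      exact div_le_div₀ zero_le_one
        (by have := hu.1; have := hv.1; have := hw.1; linarith)
        (by linarith) (denom_lower_bound hu.1 hv.1 hw.1)
    · rw [if_neg hs]
      simp only [norm_zero]
      have h1 := Real.rpow_pos_of_pos hu.1 (-2/3 : ℝ)
      have h2 := Real.rpow_pos_of_pos hv.1 (-2/3 : ℝ)
      have h3 := Real.rpow_pos_of_pos hw.1 (-2/3 : ℝ)
      exact (mul_pos (by norm_num : (0:ℝ) < 1/3) (mul_pos h1 (mul_pos h2 h3))).le
end

section
/- The Lebesgue integral over [0,1]⁴ of the function (t,u,v,w) ↦ 𝟙_{t+u+v+w < 1} / ((u+w)(u+v+w)) equals 1/2. -/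
open MeasureTheory Set ENNReal

namespace IntegralHalfAux

noncomputable def G0 (t u v w : ℝ) : ℝ≥0∞ :=
  if 0 ≤ t ∧ 0 ≤ u ∧ 0 ≤ v ∧ 0 ≤ w ∧ t + u + v + w < 1
  then ENNReal.ofReal (((u + w) * (u + v + w))⁻¹) else 0

noncomputable def G1 (t u w s : ℝ) : ℝ≥0∞ :=
  if 0 ≤ t ∧ 0 ≤ u ∧ 0 ≤ w ∧ u + w ≤ s ∧ t + s < 1
  then ENNReal.ofReal (((u + w) * s)⁻¹) else 0

noncomputable def G2 (t u a s : ℝ) : ℝ≥0∞ :=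
  if 0 ≤ t ∧ 0 ≤ u ∧ u ≤ a ∧ a ≤ s ∧ t + s < 1
  then ENNReal.ofReal ((a * s)⁻¹) else 0

noncomputable def G3' (t a s : ℝ) : ℝ≥0∞ :=
  if 0 ≤ t ∧ a ≤ s ∧ t + s < 1 then ENNReal.ofReal ((a * s)⁻¹) else 0

noncomputable def G3 (t a s : ℝ) : ℝ≥0∞ :=
  if 0 ≤ t ∧ 0 ≤ a ∧ a ≤ s ∧ t + s < 1 then ENNReal.ofReal s⁻¹ else 0

noncomputable def R (t s : ℝ) : ℝ≥0∞ :=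
  if 0 ≤ t ∧ 0 ≤ s ∧ t + s < 1 then 1 else 0

lemma mG0 : Measurable fun p : ℝ × ℝ × ℝ × ℝ => G0 p.1 p.2.1 p.2.2.1 p.2.2.2 := by
  unfold G0
  refine Measurable.ite ?_ (by fun_prop) measurable_const
  simp only [Set.setOf_and]
  exact ((measurableSet_le measurable_const measurable_fst).inter
    ((measurableSet_le measurable_const measurable_snd.fst).inter
    ((measurableSet_le measurable_const measurable_snd.snd.fst).inter
    ((measurableSet_le measurable_const measurable_snd.snd.snd).inter
    (measurableSet_lt (by fun_prop) measurable_const)))))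

lemma mG2 : Measurable fun p : ℝ × ℝ × ℝ × ℝ => G2 p.1 p.2.1 p.2.2.1 p.2.2.2 := by
  unfold G2
  refine Measurable.ite ?_ (by fun_prop) measurable_const
  simp only [Set.setOf_and]
  exact ((measurableSet_le measurable_const measurable_fst).inter
    ((measurableSet_le measurable_const measurable_snd.fst).inter
    ((measurableSet_le measurable_snd.fst measurable_snd.snd.fst).inter
    ((measurableSet_le measurable_snd.snd.fst measurable_snd.snd.snd).inter
    (measurableSet_lt (by fun_prop) measurable_const)))))

lemma mG3 : Measurable fun p : ℝ × ℝ × ℝ => G3 p.1 p.2.1 p.2.2 := by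
  unfold G3
  refine Measurable.ite ?_ (by fun_prop) measurable_const
  simp only [Set.setOf_and]
  exact ((measurableSet_le measurable_const measurable_fst).inter
    ((measurableSet_le measurable_const measurable_snd.fst).inter
    ((measurableSet_le measurable_snd.fst measurable_snd.snd).inter
    (measurableSet_lt (by fun_prop) measurable_const))))

lemma aene : ∀ᵐ x : ℝ, x ≠ (0:ℝ) := by
  rw [Filter.eventually_iff]
  have : {x : ℝ | x ≠ 0} = ({0} : Set ℝ)ᶜ := by ext x; simp
  rw [this]
  exact compl_mem_ae_iff.mpr (measure_singleton 0)

lemma p1 (t u w s : ℝ) : G0 t u (s - (u + w)) w = G1 t u w s := by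
  unfold G0 G1
  rw [show u + (s - (u + w)) + w = s from by ring,
    show t + u + (s - (u + w)) + w = t + s from by ring]
  exact if_congr (by constructor <;> rintro ⟨h1, h2, h3, h4, h5⟩ <;>
    refine ⟨h1, h2, by linarith, by linarith, h5⟩) rfl rfl

lemma p2 (t u a s : ℝ) : G1 t u (a - u) s = G2 t u a s := by
  unfold G1 G2
  rw [show u + (a - u) = a from by ring]
  exact if_congr (by constructor <;> rintro ⟨h1, h2, h3, h4, h5⟩ <;>
    refine ⟨h1, h2, by linarith, h4, h5⟩) rfl rfl

lemma int_u (t a s : ℝ) : ∫⁻ u, G2 t u a s = G3' t a s * ENNReal.ofReal a := by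
  have h : ∀ u, G2 t u a s = (Icc (0:ℝ) a).indicator (fun _ => G3' t a s) u := by
    intro u
    by_cases hu : u ∈ Icc (0:ℝ) a
    · rw [indicator_of_mem hu]
      unfold G2 G3'
      exact if_congr ⟨fun ⟨a1, _, _, a4, a5⟩ => ⟨a1, a4, a5⟩,
        fun ⟨a1, a4, a5⟩ => ⟨a1, hu.1, hu.2, a4, a5⟩⟩ rfl rfl
    · rw [indicator_of_notMem hu]
      unfold G2
      rw [if_neg]
      rintro ⟨a1, a2, a3, a4, a5⟩
      exact hu ⟨a2, a3⟩
  rw [lintegral_congr h, lintegral_indicator_const measurableSet_Icc, Real.volume_Icc, sub_zero]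

lemma int_a (t s : ℝ) : ∫⁻ a, G3 t a s
    = (if 0 ≤ t ∧ t + s < 1 then ENNReal.ofReal s⁻¹ else 0) * ENNReal.ofReal s := by
  have h : ∀ a, G3 t a s = (Icc (0:ℝ) s).indicator
      (fun _ => if 0 ≤ t ∧ t + s < 1 then ENNReal.ofReal s⁻¹ else 0) a := by
    intro a
    by_cases ha : a ∈ Icc (0:ℝ) s
    · rw [indicator_of_mem ha]
      unfold G3
      exact if_congr ⟨fun ⟨a1, _, _, a5⟩ => ⟨a1, a5⟩,
        fun ⟨a1, a5⟩ => ⟨a1, ha.1, ha.2, a5⟩⟩ rfl rfl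
    · rw [indicator_of_notMem ha]
      unfold G3
      rw [if_neg]
      rintro ⟨a1, a2, a3, a5⟩
      exact ha ⟨a2, a3⟩
  rw [lintegral_congr h, lintegral_indicator_const measurableSet_Icc, Real.volume_Icc, sub_zero]

lemma ae_a (t s : ℝ) {a : ℝ} (ha : a ≠ 0) : G3' t a s * ENNReal.ofReal a = G3 t a s := by
  unfold G3' G3
  rcases ha.lt_or_gt with hneg | hpos
  · rw [ENNReal.ofReal_of_nonpos hneg.le, mul_zero, eq_comm, if_neg]
    rintro ⟨_, h2, _, _⟩; linarith
  · by_cases h : 0 ≤ t ∧ a ≤ s ∧ t + s < 1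
    · rw [if_pos h, if_pos ⟨h.1, hpos.le, h.2.1, h.2.2⟩, ← ENNReal.ofReal_mul' hpos.le]
      congr 1
      rw [mul_inv, mul_comm a⁻¹ s⁻¹, mul_assoc, inv_mul_cancel₀ (ne_of_gt hpos), mul_one]
    · rw [if_neg h, zero_mul, eq_comm, if_neg]
      rintro ⟨h1, h2, h3, h4⟩; exact h ⟨h1, h3, h4⟩

lemma ae_s (t : ℝ) {s : ℝ} (hs : s ≠ 0) :
    (if 0 ≤ t ∧ t + s < 1 then ENNReal.ofReal s⁻¹ else 0) * ENNReal.ofReal s = R t s := by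
  unfold R
  rcases hs.lt_or_gt with hneg | hpos
  · rw [ENNReal.ofReal_of_nonpos hneg.le, mul_zero, eq_comm, if_neg]
    rintro ⟨_, h2, _⟩; linarith
  · by_cases h : 0 ≤ t ∧ t + s < 1
    · rw [if_pos h, if_pos ⟨h.1, hpos.le, h.2⟩, ← ENNReal.ofReal_mul' hpos.le,
        inv_mul_cancel₀ (ne_of_gt hpos), ENNReal.ofReal_one]
    · rw [if_neg h, zero_mul, eq_comm, if_neg]
      rintro ⟨h1, h2, h3⟩; exact h ⟨h1, h3⟩

lemma int_s (t : ℝ) : ∫⁻ s, R t s = if 0 ≤ t then ENNReal.ofReal (1 - t) else 0 := by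
  by_cases ht : 0 ≤ t
  · rw [if_pos ht]
    have h : ∀ s, R t s = (Ico (0:ℝ) (1 - t)).indicator (fun _ => (1 : ℝ≥0∞)) s := by
      intro s
      unfold R
      by_cases hs : s ∈ Ico (0:ℝ) (1 - t)
      · rw [indicator_of_mem hs, if_pos ⟨ht, hs.1, by linarith [hs.2]⟩]
      · rw [indicator_of_notMem hs, if_neg]
        rintro ⟨h1, h2, h3⟩; exact hs ⟨h2, by linarith⟩
    rw [lintegral_congr h, lintegral_indicator_const measurableSet_Ico, one_mul,
      Real.volume_Ico, sub_zero]
  · rw [if_neg ht]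
    have h : ∀ s, R t s = 0 := by
      intro s
      unfold R
      rw [if_neg]
      rintro ⟨h1, _, _⟩; exact ht h1
    rw [lintegral_congr h, lintegral_zero]

lemma int_t : ∫⁻ t : ℝ, (if 0 ≤ t then ENNReal.ofReal (1 - t) else 0) = ENNReal.ofReal (1/2) := by
  have h : ∀ t : ℝ, (if 0 ≤ t then ENNReal.ofReal (1 - t) else 0)
      = (Icc (0:ℝ) 1).indicator (fun x => ENNReal.ofReal (1 - x)) t := by
    intro t
    by_cases ht : t ∈ Icc (0:ℝ) 1
    · rw [indicator_of_mem ht, if_pos ht.1]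
    · rw [indicator_of_notMem ht]
      rw [Set.mem_Icc, not_and_or] at ht
      rcases ht with h1 | h2
      · rw [if_neg h1]
      · push_neg at h2
        rw [if_pos (by linarith), ENNReal.ofReal_of_nonpos (by linarith)]
  rw [lintegral_congr h, lintegral_indicator measurableSet_Icc]
  have hint : Integrable (fun t : ℝ => 1 - t) (volume.restrict (Icc (0:ℝ) 1)) :=
    (continuous_const.sub continuous_id).continuousOn.integrableOn_Icc
  have hnn : 0 ≤ᵐ[volume.restrict (Icc (0:ℝ) 1)] fun t : ℝ => 1 - t :=
    ae_restrict_of_forall_mem measurableSet_Icc fun t ht => by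
      simp only [Pi.zero_apply]; linarith [ht.2]
  rw [← ofReal_integral_eq_lintegral_ofReal hint hnn]
  congr 1
  rw [integral_Icc_eq_integral_Ioc, ← intervalIntegral.integral_of_le (zero_le_one (α := ℝ))]
  rw [intervalIntegral.integral_sub intervalIntegrable_const intervalIntegral.intervalIntegrable_id,
    intervalIntegral.integral_const, integral_id]
  norm_num

lemma key (t : ℝ) : (∫⁻ u, ∫⁻ v, ∫⁻ w, G0 t u v w)
    = if 0 ≤ t then ENNReal.ofReal (1 - t) else 0 := by
  have mS1 : ∀ u : ℝ, Measurable fun p : ℝ × ℝ => G0 t u p.1 p.2 := fun u =>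
    mG0.comp (measurable_const.prodMk (measurable_const.prodMk measurable_id))
  have mS4 : Measurable fun q : (ℝ × ℝ) × ℝ => G2 t q.1.1 q.1.2 q.2 :=
    mG2.comp (measurable_const.prodMk (measurable_fst.fst.prodMk
      (measurable_fst.snd.prodMk measurable_snd)))
  have mS5 : ∀ a : ℝ, Measurable fun p : ℝ × ℝ => G2 t p.1 a p.2 := fun a =>
    mG2.comp (measurable_const.prodMk (measurable_fst.prodMk
      (measurable_const.prodMk measurable_snd)))
  have mS8 : Measurable fun p : ℝ × ℝ => G3 t p.1 p.2 :=
    mG3.comp (measurable_const.prodMk measurable_id)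
  calc ∫⁻ u, ∫⁻ v, ∫⁻ w, G0 t u v w
      = ∫⁻ u, ∫⁻ w, ∫⁻ v, G0 t u v w :=
        lintegral_congr fun u => lintegral_lintegral_swap (mS1 u).aemeasurable
    _ = ∫⁻ u, ∫⁻ w, ∫⁻ s, G1 t u w s := by
        refine lintegral_congr fun u => lintegral_congr fun w => ?_
        calc ∫⁻ v, G0 t u v w = ∫⁻ v, G1 t u w (v + (u + w)) :=
              lintegral_congr fun v => by simpa using p1 t u w (v + (u + w))
          _ = ∫⁻ s, G1 t u w s := lintegral_add_right_eq_self (fun s => G1 t u w s) (u + w)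
    _ = ∫⁻ u, ∫⁻ a, ∫⁻ s, G2 t u a s := by
        refine lintegral_congr fun u => ?_
        calc ∫⁻ w, ∫⁻ s, G1 t u w s = ∫⁻ w, ∫⁻ s, G1 t u (w + u - u) s := by simp
          _ = ∫⁻ a, ∫⁻ s, G1 t u (a - u) s :=
              lintegral_add_right_eq_self (fun a => ∫⁻ s, G1 t u (a - u) s) u
          _ = ∫⁻ a, ∫⁻ s, G2 t u a s :=
              lintegral_congr fun a => lintegral_congr fun s => p2 t u a s
    _ = ∫⁻ a, ∫⁻ u, ∫⁻ s, G2 t u a s :=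
        lintegral_lintegral_swap (mS4.lintegral_prod_right').aemeasurable
    _ = ∫⁻ a, ∫⁻ s, ∫⁻ u, G2 t u a s :=
        lintegral_congr fun a => lintegral_lintegral_swap (mS5 a).aemeasurable
    _ = ∫⁻ a, ∫⁻ s, G3' t a s * ENNReal.ofReal a :=
        lintegral_congr fun a => lintegral_congr fun s => int_u t a s
    _ = ∫⁻ a, ∫⁻ s, G3 t a s :=
        lintegral_congr_ae (aene.mono fun a ha => lintegral_congr fun s => ae_a t s ha)
    _ = ∫⁻ s, ∫⁻ a, G3 t a s := lintegral_lintegral_swap mS8.aemeasurable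
    _ = ∫⁻ s, (if 0 ≤ t ∧ t + s < 1 then ENNReal.ofReal s⁻¹ else 0) * ENNReal.ofReal s :=
        lintegral_congr fun s => int_a t s
    _ = ∫⁻ s, R t s := lintegral_congr_ae (aene.mono fun s hs => ae_s t hs)
    _ = if 0 ≤ t then ENNReal.ofReal (1 - t) else 0 := int_s t

end IntegralHalfAux

open IntegralHalfAux

/-- The Lebesgue integral over `[0,1]⁴` of
`(t,u,v,w) ↦ 𝟙_{t+u+v+w < 1}/((u+w)(u+v+w))` equals `1/2`. -/
theorem integral_indicator_uw_uvw_eq_half :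
    ∫ p in (Set.Icc (0:ℝ) 1) ×ˢ (Set.Icc (0:ℝ) 1) ×ˢ
        (Set.Icc (0:ℝ) 1) ×ˢ (Set.Icc (0:ℝ) 1),
      (if p.1 + p.2.1 + p.2.2.1 + p.2.2.2 < 1 then
        1 / ((p.2.1 + p.2.2.2) * (p.2.1 + p.2.2.1 + p.2.2.2))
      else 0) = 1 / 2 := by
  set box := (Set.Icc (0:ℝ) 1) ×ˢ (Set.Icc (0:ℝ) 1) ×ˢ (Set.Icc (0:ℝ) 1) ×ˢ (Set.Icc (0:ℝ) 1)
    with hboxdef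
  have hbox : MeasurableSet box :=
    measurableSet_Icc.prod (measurableSet_Icc.prod (measurableSet_Icc.prod measurableSet_Icc))
  have hnn : 0 ≤ᵐ[volume.restrict box] fun p : ℝ × ℝ × ℝ × ℝ =>
      (if p.1 + p.2.1 + p.2.2.1 + p.2.2.2 < 1 then
        1 / ((p.2.1 + p.2.2.2) * (p.2.1 + p.2.2.1 + p.2.2.2)) else 0) := by
    refine ae_restrict_of_forall_mem hbox fun p hp => ?_
    simp only [hboxdef, Set.mem_prod, Set.mem_Icc] at hp
    simp only [Pi.zero_apply]
    split_ifs
    · exact div_nonneg zero_le_one (mul_nonneg (by linarith [hp.2.1.1, hp.2.2.2.1])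
        (by linarith [hp.2.1.1, hp.2.2.1.1, hp.2.2.2.1]))
    · exact le_refl 0
  have hmf : Measurable fun p : ℝ × ℝ × ℝ × ℝ =>
      (if p.1 + p.2.1 + p.2.2.1 + p.2.2.2 < 1 then
        1 / ((p.2.1 + p.2.2.2) * (p.2.1 + p.2.2.1 + p.2.2.2)) else 0) := by
    refine Measurable.ite (measurableSet_lt (by fun_prop) measurable_const) (by fun_prop)
      measurable_const
  rw [MeasureTheory.integral_eq_lintegral_of_nonneg_ae hnn
    (hmf.aestronglyMeasurable.restrict)]
  have hind : ∀ p : ℝ × ℝ × ℝ × ℝ, box.indicator (fun p => ENNReal.ofReal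
      (if p.1 + p.2.1 + p.2.2.1 + p.2.2.2 < 1 then
        1 / ((p.2.1 + p.2.2.2) * (p.2.1 + p.2.2.1 + p.2.2.2)) else 0)) p
      = G0 p.1 p.2.1 p.2.2.1 p.2.2.2 := by
    intro p
    by_cases hp : p ∈ box
    · rw [Set.indicator_of_mem hp]
      have hp' := hp
      simp only [hboxdef, Set.mem_prod, Set.mem_Icc] at hp'
      unfold G0
      by_cases hlt : p.1 + p.2.1 + p.2.2.1 + p.2.2.2 < 1
      · rw [if_pos hlt, if_pos ⟨hp'.1.1, hp'.2.1.1, hp'.2.2.1.1, hp'.2.2.2.1, hlt⟩, one_div]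
      · rw [if_neg hlt, if_neg (fun h => hlt h.2.2.2.2), ENNReal.ofReal_zero]
    · rw [Set.indicator_of_notMem hp]
      unfold G0
      rw [eq_comm, if_neg]
      rintro ⟨h1, h2, h3, h4, h5⟩
      refine hp ?_
      simp only [hboxdef, Set.mem_prod, Set.mem_Icc]
      exact ⟨⟨h1, by linarith⟩, ⟨h2, by linarith⟩, ⟨h3, by linarith⟩, ⟨h4, by linarith⟩⟩
  have hlin : (∫⁻ p in box, ENNReal.ofReal
      (if p.1 + p.2.1 + p.2.2.1 + p.2.2.2 < 1 then
        1 / ((p.2.1 + p.2.2.2) * (p.2.1 + p.2.2.1 + p.2.2.2)) else 0))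
      = ENNReal.ofReal (1/2) := by
    rw [← lintegral_indicator hbox, lintegral_congr hind]
    have expand : (∫⁻ p : ℝ × ℝ × ℝ × ℝ, G0 p.1 p.2.1 p.2.2.1 p.2.2.2)
        = ∫⁻ t, ∫⁻ u, ∫⁻ v, ∫⁻ w, G0 t u v w := by
      rw [MeasureTheory.Measure.volume_eq_prod, lintegral_prod _ mG0.aemeasurable]
      refine lintegral_congr fun t => ?_
      show (∫⁻ y : ℝ × ℝ × ℝ, G0 t y.1 y.2.1 y.2.2) = _
      have h2 : Measurable fun q : ℝ × ℝ × ℝ => G0 t q.1 q.2.1 q.2.2 :=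
        mG0.comp (measurable_const.prodMk measurable_id)
      rw [MeasureTheory.Measure.volume_eq_prod, lintegral_prod _ h2.aemeasurable]
      refine lintegral_congr fun u => ?_
      show (∫⁻ r : ℝ × ℝ, G0 t u r.1 r.2) = _
      have h3 : Measurable fun r : ℝ × ℝ => G0 t u r.1 r.2 :=
        mG0.comp (measurable_const.prodMk (measurable_const.prodMk measurable_id))
      rw [MeasureTheory.Measure.volume_eq_prod, lintegral_prod _ h3.aemeasurable]
    rw [expand, lintegral_congr key, int_t]
  rw [hlin, ENNReal.toReal_ofReal (by norm_num)]
end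

section
/- Let Σ² be a symmetric positive definite real 2×2 matrix. Then there exists C > 0 such that for every real t ≥ 1, | ∑_{x ∈ ℤ²} exp(−⟨(Σ²)⁻¹x, x⟩/(2t)) − 2πt·√(det Σ²) | ≤ C·√t. -/
open Matrix

/-!
Complete the square: `⟨(Σ²)⁻¹ x, x⟩ = d m² + c (n + κ m)²` with `c d = det (Σ²)⁻¹`. For fixed
`m` the sum over `n` is a shifted one-dimensional Gaussian sum, which by Poisson summation (the
transformation formula of `jacobiTheta₂`) equals `√(π/α)` up to an error `√α`, uniformly in the
shift. Summing against the Gaussian weights in `m` gives the main term `2πt √(det Σ²)` with an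
error that is even bounded in `t ≥ 1`.
-/

open Complex Real

lemma summable_exp_neg_mul_add_sq {α : ℝ} (hα : 0 < α) (s : ℝ) :
    Summable fun n : ℤ ↦ rexp (-α * (n + s) ^ 2) := by
  have h := ((summable_jacobiTheta₂_term_iff ((α * s / π : ℝ) * I) ((α / π : ℝ) * I)).2
    (by simpa using div_pos hα pi_pos)).norm.mul_left (rexp (-α * s ^ 2))
  refine h.congr fun n ↦ ?_
  rw [norm_jacobiTheta₂_term, ← Real.exp_add]
  simp only [mul_I_im, ofReal_re]
  congr 1
  field_simp
  ring

lemma ofReal_tsum_exp_neg_mul_add_sq {α : ℝ} (hα : 0 < α) (s : ℝ) :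
    ((∑' n : ℤ, rexp (-α * (n + s) ^ 2) : ℝ) : ℂ) = √(π / α) * jacobiTheta₂ s (π / α * I) := by
  have ha : 0 < ((α / π : ℝ) : ℂ).re := by simpa using div_pos hα pi_pos
  have hsqrt : 1 / ((α / π : ℝ) : ℂ) ^ (1 / 2 : ℂ) = √(π / α) := by
    rw [Real.sqrt_eq_rpow, ← inv_div α π, Real.inv_rpow (div_pos hα pi_pos).le,
      ofReal_inv, ofReal_cpow (div_pos hα pi_pos).le]
    norm_num
  have hπ : (π : ℂ) ≠ 0 := ofReal_ne_zero.2 pi_ne_zero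
  have hα' : (α : ℂ) ≠ 0 := ofReal_ne_zero.2 hα.ne'
  rw [ofReal_tsum, jacobiTheta₂, ← hsqrt]
  calc ∑' n : ℤ, ((rexp (-α * (n + s) ^ 2) : ℝ) : ℂ)
      = ∑' n : ℤ, cexp (-α * s ^ 2) * cexp (-π * ((α / π : ℝ) : ℂ) * n ^ 2
          + 2 * π * ((-(α * s / π) : ℝ) : ℂ) * n) := by
        congr 1 with n
        rw [← Complex.exp_add, ofReal_exp]
        congr 1
        push_cast
        field_simp
        ring
    _ = 1 / ((α / π : ℝ) : ℂ) ^ (1 / 2 : ℂ) * ∑' n : ℤ, cexp (-α * s ^ 2) *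
          cexp (-π / ((α / π : ℝ) : ℂ) * (n + I * ((-(α * s / π) : ℝ) : ℂ)) ^ 2) := by
        rw [tsum_mul_left, Complex.tsum_exp_neg_quadratic ha, tsum_mul_left]
        ring
    _ = _ := by
        congr 1
        refine tsum_congr fun n ↦ ?_
        rw [jacobiTheta₂_term, ← Complex.exp_add]
        congr 1
        push_cast
        field_simp
        ring_nf
        rw [I_sq]
        ring

lemma norm_jacobiTheta₂_ofReal_sub_one_le (x : ℝ) {τ : ℂ} (hτ : 0 < τ.im) :
    ‖jacobiTheta₂ x τ - 1‖ ≤ ‖jacobiTheta (τ.im * I) - 1‖ := by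
  have hτ' : 0 < (τ.im * I : ℂ).im := by simpa using hτ
  set f : ℤ → ℂ := fun n ↦ jacobiTheta₂_term n x τ - if n = 0 then 1 else 0
  have hterm : ∀ n : ℤ, ‖jacobiTheta₂_term n x τ‖ = jacobiTheta₂_term n 0 (τ.im * I) := by
    intro n
    rw [norm_jacobiTheta₂_term, jacobiTheta₂_term, ofReal_exp]
    congr 1
    push_cast
    ring_nf
    simp [I_sq]
  have hnorm : HasSum (fun n ↦ (‖f n‖ : ℂ)) (jacobiTheta (τ.im * I) - 1) := by
    rw [jacobiTheta_eq_jacobiTheta₂]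
    refine ((hasSum_jacobiTheta₂_term 0 hτ').sub (hasSum_ite_eq 0 1)).congr_fun fun n ↦ ?_
    rcases eq_or_ne n 0 with rfl | hn
    · simp [f, jacobiTheta₂_term]
    · simp [f, hn, hterm]
  have hf : HasSum f (jacobiTheta₂ x τ - 1) :=
    (hasSum_jacobiTheta₂_term (x : ℂ) hτ).sub (hasSum_ite_eq 0 1)
  have hsummable : Summable fun n ↦ ‖f n‖ := Complex.summable_ofReal.1 hnorm.summable
  calc ‖jacobiTheta₂ x τ - 1‖ ≤ ∑' n, ‖f n‖ := hf.tsum_eq ▸ norm_tsum_le_tsum_norm hsummable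
    _ = ‖jacobiTheta (τ.im * I) - 1‖ := by
      rw [← hnorm.tsum_eq, ← ofReal_tsum,
        Complex.norm_of_nonneg (tsum_nonneg fun n ↦ norm_nonneg _)]

lemma norm_jacobiTheta_mul_I_sub_one_le {y : ℝ} (hy : 0 < y) :
    ‖jacobiTheta (y * I) - 1‖ ≤ 2 / (π * y) := by
  have hy' : 0 < (y * I : ℂ).im := by simpa using hy
  refine (norm_jacobiTheta_sub_one_le hy').trans ?_
  have hq : (1 + π * y) * rexp (-π * y) ≤ 1 := by
    rw [neg_mul, Real.exp_neg, mul_inv_le_iff₀ (Real.exp_pos _)]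
    linarith [Real.add_one_le_exp (π * y)]
  have hq1 : rexp (-π * y) < 1 := Real.exp_lt_one_iff.2 (by nlinarith [pi_pos])
  simp only [mul_I_im, ofReal_re]
  rw [div_mul_eq_mul_div, div_le_div_iff₀ (by linarith) (by positivity)]
  nlinarith

lemma abs_tsum_exp_neg_mul_add_sq_sub_le {α : ℝ} (hα : 0 < α) (s : ℝ) :
    |∑' n : ℤ, rexp (-α * (n + s) ^ 2) - √(π / α)| ≤ √α := by
  have hy : 0 < π / α := div_pos pi_pos hα
  calc |∑' n : ℤ, rexp (-α * (n + s) ^ 2) - √(π / α)|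
      = √(π / α) * ‖jacobiTheta₂ s (π / α * I) - 1‖ := by
        rw [← Real.norm_eq_abs, ← Complex.norm_real, ofReal_sub, ofReal_tsum_exp_neg_mul_add_sq hα,
          ← mul_sub_one, norm_mul, Complex.norm_of_nonneg (Real.sqrt_nonneg _)]
    _ ≤ √(π / α) * (2 / (π * (π / α))) := by
        gcongr
        have h := norm_jacobiTheta₂_ofReal_sub_one_le s (τ := (π / α : ℝ) * I) (by simpa using hy)
        simp only [mul_I_im, ofReal_re] at h
        exact_mod_cast h.trans (norm_jacobiTheta_mul_I_sub_one_le hy)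
    _ = √(π / α * (2 * α / π ^ 2) ^ 2) := by
        rw [Real.sqrt_mul hy.le, Real.sqrt_sq (by positivity)]
        field_simp
    _ ≤ √α := by
        gcongr
        field_simp
        nlinarith [pi_gt_three, pow_le_pow_left₀ (by norm_num) pi_gt_three.le 3]

lemma abs_tsum_mul_sub_mul_le {ι : Type*} {w f : ι → ℝ} {K L E E' : ℝ} (hw : ∀ i, 0 ≤ w i)
    (hws : Summable w) (hK : 0 ≤ K) (hE : 0 ≤ E) (hf : ∀ i, |f i - K| ≤ E)
    (hL : |∑' i, w i - L| ≤ E') :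
    |∑' i, w i * f i - K * L| ≤ K * E' + (L + E') * E := by
  have hbound : ∀ i, ‖w i * (f i - K)‖ ≤ w i * E := fun i ↦ by
    rw [norm_mul, Real.norm_of_nonneg (hw i)]
    exact mul_le_mul_of_nonneg_left (hf i) (hw i)
  have hdev : Summable fun i ↦ w i * (f i - K) := (hws.mul_right E).of_norm_bounded hbound
  have hsplit : ∑' i, w i * f i - K * L = K * (∑' i, w i - L) + ∑' i, w i * (f i - K) := by
    have h : ∑' i, w i * f i = ∑' i, K * w i + ∑' i, w i * (f i - K) := by
      rw [← (hws.mul_left K).tsum_add hdev]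
      congr 1 with i
      ring
    rw [h, tsum_mul_left]
    ring
  rw [hsplit]
  calc |K * (∑' i, w i - L) + ∑' i, w i * (f i - K)|
      ≤ K * |∑' i, w i - L| + ‖∑' i, w i * (f i - K)‖ := by
        rw [Real.norm_eq_abs, ← abs_of_nonneg hK, ← abs_mul, abs_of_nonneg hK]
        exact abs_add_le _ _
    _ ≤ K * E' + (∑' i, w i) * E := by
        gcongr
        rw [← tsum_mul_right]
        exact tsum_of_norm_bounded (hws.mul_right E).hasSum hbound
    _ ≤ K * E' + (L + E') * E := by
        gcongr
        linarith [(abs_le.1 hL).2]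

theorem abs_tsum_exp_neg_completedSquare_sub_le {c d r : ℝ} (hc : 0 < c) (hd : 0 < d)
    (hr : 0 < r) (κ : ℝ) :
    |∑' p : ℤ × ℤ, rexp (-r * (d * p.1 ^ 2 + c * (p.2 + κ * p.1) ^ 2)) - π / (r * √(c * d))|
      ≤ √(π * d / c) + √(π * c / d) + r * √(c * d) := by
  set w : ℤ → ℝ := fun m ↦ rexp (-(r * d) * m ^ 2)
  set g : ℤ → ℤ → ℝ := fun m n ↦ rexp (-(r * c) * (n + κ * m) ^ 2)
  have hw : Summable w := by simpa [w] using summable_exp_neg_mul_add_sq (mul_pos hr hd) 0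
  have hwL : |∑' m, w m - √(π / (r * d))| ≤ √(r * d) := by
    simpa [w] using abs_tsum_exp_neg_mul_add_sq_sub_le (mul_pos hr hd) 0
  have hgK (m : ℤ) : |∑' n, g m n - √(π / (r * c))| ≤ √(r * c) :=
    abs_tsum_exp_neg_mul_add_sq_sub_le (mul_pos hr hc) (κ * m)
  have hsum : ∑' p : ℤ × ℤ, rexp (-r * (d * p.1 ^ 2 + c * (p.2 + κ * p.1) ^ 2))
      = ∑' m, w m * ∑' n, g m n := by
    have hterm (p : ℤ × ℤ) : rexp (-r * (d * p.1 ^ 2 + c * (p.2 + κ * p.1) ^ 2))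
        = w p.1 * g p.1 p.2 := by
      simp only [w, g, ← Real.exp_add]
      ring_nf
    have hinner (m : ℤ) : Summable fun n ↦ w m * g m n :=
      (summable_exp_neg_mul_add_sq (mul_pos hr hc) (κ * m)).mul_left _
    have houter : Summable fun m ↦ w m * ∑' n, g m n := by
      refine (hw.mul_right (√(π / (r * c)) + √(r * c))).of_nonneg_of_le
        (fun m ↦ mul_nonneg (exp_pos _).le (tsum_nonneg fun n ↦ (exp_pos _).le)) fun m ↦ ?_
      gcongr
      linarith [(abs_le.1 (hgK m)).2]
    have hprod : Summable fun p : ℤ × ℤ ↦ w p.1 * g p.1 p.2 :=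
      (summable_prod_of_nonneg fun p ↦ (mul_pos (exp_pos _) (exp_pos _)).le).2
        ⟨hinner, houter.congr fun m ↦ tsum_mul_left.symm⟩
    simp_rw [hterm, hprod.tsum_prod' hinner, tsum_mul_left]
  have hmain : √(π / (r * c)) * √(π / (r * d)) = π / (r * √(c * d)) := by
    rw [← sqrt_mul (by positivity), ← sqrt_sq (by positivity : 0 ≤ π / (r * √(c * d))), div_pow,
      mul_pow, sq_sqrt (by positivity)]
    congr 1
    field_simp
  have herror : √(π / (r * c)) * √(r * d) + (√(π / (r * d)) + √(r * d)) * √(r * c)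
      = √(π * d / c) + √(π * c / d) + r * √(c * d) := by
    rw [add_mul, ← sqrt_mul (by positivity), ← sqrt_mul (by positivity),
      ← sqrt_mul (by positivity), ← sqrt_sq hr.le, ← sqrt_mul (by positivity), sqrt_sq hr.le,
      show π / (r * c) * (r * d) = π * d / c by field_simp,
      show π / (r * d) * (r * c) = π * c / d by field_simp,
      show r * d * (r * c) = r ^ 2 * (c * d) by ring, add_assoc]
  rw [hsum, ← hmain, ← herror]
  refine (abs_tsum_mul_sub_mul_le (fun m ↦ (exp_pos _).le) hw (sqrt_nonneg _) (sqrt_nonneg _)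
    hgK hwL).trans_eq ?_
  ring

lemma Matrix.IsSymm.dotProduct_mulVec_fin_two {K : Type*} [Field K]
    {A : Matrix (Fin 2) (Fin 2) K} (hA : A.IsSymm) (h11 : A 1 1 ≠ 0) (x y : K) :
    A *ᵥ ![x, y] ⬝ᵥ ![x, y] = A.det / A 1 1 * x ^ 2 + A 1 1 * (y + A 0 1 / A 1 1 * x) ^ 2 := by
  simp only [det_fin_two, mulVec, dotProduct, Fin.sum_univ_two, cons_val_zero, cons_val_one]
  rw [hA.apply 0 1]
  field_simp
  ring

theorem gaussian_lattice_sum_full_general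
    (S : Matrix (Fin 2) (Fin 2) ℝ) (hpd : S.PosDef) :
    ∃ C > 0, ∀ t : ℝ, 1 ≤ t →
      |(∑' x : ℤ × ℤ,
          Real.exp (-(S⁻¹ *ᵥ ![(x.1 : ℝ), (x.2 : ℝ)] ⬝ᵥ ![(x.1 : ℝ), (x.2 : ℝ)])
            / (2 * t)))
        - 2 * Real.pi * t * Real.sqrt S.det| ≤ C * Real.sqrt t := by
  have hA : S⁻¹.PosDef := hpd.inv
  have hsymm : S⁻¹.IsSymm := (conjTranspose_eq_transpose_of_trivial _).symm.trans hA.isHermitian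
  set c := S⁻¹ 1 1
  set d := S⁻¹.det / c
  have hc : 0 < c := hA.diag_pos
  have hd : 0 < d := div_pos hA.det_pos hc
  have hcd : c * d = S.det⁻¹ := by
    rw [mul_div_cancel₀ _ hc.ne', det_nonsing_inv, Ring.inverse_eq_inv']
  refine ⟨√(π * d / c) + √(π * c / d) + √(c * d), by positivity, fun t ht ↦ ?_⟩
  have ht0 : 0 < t := by linarith
  have hexponent (x : ℤ × ℤ) :
      -(S⁻¹ *ᵥ ![(x.1 : ℝ), (x.2 : ℝ)] ⬝ᵥ ![(x.1 : ℝ), (x.2 : ℝ)]) / (2 * t) =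
        -(1 / (2 * t)) * (d * x.1 ^ 2 + c * (x.2 + S⁻¹ 0 1 / c * x.1) ^ 2) := by
    rw [hsymm.dotProduct_mulVec_fin_two hc.ne']
    ring
  have hmain : π / (1 / (2 * t) * √(c * d)) = 2 * π * t * √S.det := by
    rw [hcd, sqrt_inv]
    field_simp
  calc _ = |∑' x : ℤ × ℤ,
          rexp (-(1 / (2 * t)) * (d * x.1 ^ 2 + c * (x.2 + S⁻¹ 0 1 / c * x.1) ^ 2))
        - π / (1 / (2 * t) * √(c * d))| := by simp_rw [hexponent, hmain]
    _ ≤ √(π * d / c) + √(π * c / d) + 1 / (2 * t) * √(c * d) :=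
        abs_tsum_exp_neg_completedSquare_sub_le hc hd (by positivity) _
    _ ≤ √(π * d / c) + √(π * c / d) + √(c * d) := by
        gcongr
        exact mul_le_of_le_one_left (sqrt_nonneg _) (by rw [div_le_one (by positivity)]; linarith)
    _ ≤ _ := le_mul_of_one_le_right (by positivity) (one_le_sqrt.2 ht)

/-- Gaussian lattice-sum estimate: for a symmetric positive definite `Σ²`, there is
`C > 0` such that for all reals `t ≥ 1`,
`|∑_{x ∈ ℤ²} exp(−⟨(Σ²)⁻¹x, x⟩/(2t)) − 2πt√(det Σ²)| ≤ C√t`. -/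
theorem gaussian_lattice_sum_full
    (S : Matrix (Fin 2) (Fin 2) ℝ) (hsymm : S.IsSymm) (hpd : S.PosDef) :
    ∃ C > 0, ∀ t : ℝ, 1 ≤ t →
      |(∑' x : ℤ × ℤ,
          Real.exp (-(S⁻¹ *ᵥ ![(x.1 : ℝ), (x.2 : ℝ)] ⬝ᵥ ![(x.1 : ℝ), (x.2 : ℝ)])
            / (2 * t)))
        - 2 * Real.pi * t * Real.sqrt S.det| ≤ C * Real.sqrt t :=
  gaussian_lattice_sum_full_general S hpd
end

section
/- As n → ∞, the sum ∑ 1/((r+s)(r+ℓ+s)), taken over all integers k₁ ≥ 1, r ≥ 1, ℓ ≥ 1, s ≥ 1 with k₁ + r + ℓ + s ≤ n, is asymptotically equivalent to n²/2. -/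
/-!
Substituting `a = r + s` and `b = r + ℓ + s`, every pair `1 ≤ a < b ≤ n` comes from exactly
`(n - b)(a - 1)` quadruples (free choice of `r < a` and `k₁ ≤ n - b`), so the sum is
`∑_{a < b ≤ n} (n - b)(a - 1)/(ab)`. The inner sum over `a` equals
`(n - b) - (n - b)(1 + H_{b-1})/b`, hence the whole sum is `n(n - 1)/2` minus a nonnegative
defect of size at most `n(1 + H_n)² = O(n log² n) = o(n²)`.
-/

open Filter Finset Topology

def quadruples (n : ℕ) : Finset (ℕ × ℕ × ℕ × ℕ) :=
  {p ∈ Icc 1 n ×ˢ Icc 1 n ×ˢ Icc 1 n ×ˢ Icc 1 n | p.1 + p.2.1 + p.2.2.1 + p.2.2.2 ≤ n}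

theorem card_quadruples_fiber (n a b : ℕ) (hab : a < b) :
    #{p ∈ quadruples n | (p.2.1 + p.2.2.2, p.2.1 + p.2.2.1 + p.2.2.2) = (a, b)} =
      (n - b) * (a - 1) := by
  calc _ = #(Icc 1 (n - b) ×ˢ Icc 1 (a - 1)) := by
        refine card_nbij' (fun p => (p.1, p.2.1)) (fun q => (q.1, q.2, b - a, a - q.2))
          ?_ ?_ ?_ ?_
        all_goals
          intro p hp
          simp only [quadruples, coe_filter, coe_product, Set.mem_ofPred_eq, Set.mem_prod,
            mem_filter, mem_product, coe_Icc, Set.mem_Icc, mem_Icc, Prod.ext_iff, true_and]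
            at hp ⊢ <;>
          omega
    _ = (n - b) * (a - 1) := by simp

theorem sum_quadruples_eq_sum_Icc_Icc (n : ℕ) :
    ∑ p ∈ quadruples n, 1 / (((p.2.1 : ℝ) + p.2.2.2) * ((p.2.1 : ℝ) + p.2.2.1 + p.2.2.2)) =
      ∑ b ∈ Icc 1 n, ∑ a ∈ Icc 1 (b - 1), ((n : ℝ) - b) * (a - 1) / (a * b) := by
  set g : ℕ × ℕ × ℕ × ℕ → ℕ × ℕ := fun p =>
    (p.2.1 + p.2.2.2, p.2.1 + p.2.2.1 + p.2.2.2)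
  set T : Finset (ℕ × ℕ) := {ab ∈ Icc 1 n ×ˢ Icc 1 n | ab.1 < ab.2}
  have hg : ∀ p ∈ quadruples n, g p ∈ T := by
    intro p hp
    simp only [quadruples, T, g, mem_filter, mem_product, mem_Icc] at hp ⊢
    omega
  have hT : ∀ ab : ℕ × ℕ, ab ∈ T ↔ ab.2 ∈ Icc 1 n ∧ ab.1 ∈ Icc 1 (ab.2 - 1) := by
    intro ab
    simp only [T, mem_filter, mem_product, mem_Icc]
    omega
  calc ∑ p ∈ quadruples n, 1 / (((p.2.1 : ℝ) + p.2.2.2) * ((p.2.1 : ℝ) + p.2.2.1 + p.2.2.2))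
      = ∑ p ∈ quadruples n, 1 / (((g p).1 : ℝ) * (g p).2) := by simp [g]
    _ = ∑ ab ∈ T, ∑ p ∈ quadruples n with g p = ab, 1 / ((ab.1 : ℝ) * ab.2) :=
      (sum_fiberwise_of_maps_to' hg fun ab => 1 / ((ab.1 : ℝ) * ab.2)).symm
    _ = ∑ b ∈ Icc 1 n, ∑ a ∈ Icc 1 (b - 1), ((n : ℝ) - b) * (a - 1) / (a * b) := by
      rw [sum_finset_product_right T (Icc 1 n) (fun b => Icc 1 (b - 1)) hT]
      refine sum_congr rfl fun b hb => sum_congr rfl fun a ha => ?_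
      rw [mem_Icc] at ha hb
      rw [sum_const, card_quadruples_fiber n a b (by omega), nsmul_eq_mul]
      push_cast [Nat.cast_sub hb.2, Nat.cast_sub ha.1]
      ring

theorem harmonic_mono : Monotone harmonic :=
  monotone_nat_of_le_succ fun n => by
    rw [harmonic_succ]
    exact le_add_of_nonneg_right (by positivity)

theorem harmonic_nonneg (n : ℕ) : 0 ≤ harmonic n :=
  harmonic_zero ▸ harmonic_mono n.zero_le

theorem sum_Icc_one_sub_inv (m : ℕ) :
    ∑ a ∈ Icc 1 m, (1 - (a : ℝ)⁻¹) = m - harmonic m := by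
  rw [sum_sub_distrib, harmonic_eq_sum_Icc]
  simp

theorem sum_Icc_sub_mul_sub_one_div (n b : ℕ) (hb : 1 ≤ b) :
    ∑ a ∈ Icc 1 (b - 1), ((n : ℝ) - b) * (a - 1) / (a * b) =
      (n - b) - (n - b) * (1 + harmonic (b - 1)) / b := by
  have hb0 : (b : ℝ) ≠ 0 := by positivity
  calc ∑ a ∈ Icc 1 (b - 1), ((n : ℝ) - b) * (a - 1) / (a * b)
      = ∑ a ∈ Icc 1 (b - 1), ((n : ℝ) - b) / b * (1 - (a : ℝ)⁻¹) := by
        refine sum_congr rfl fun a ha => ?_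
        have ha0 : (a : ℝ) ≠ 0 := by have := (mem_Icc.1 ha).1; positivity
        field_simp
    _ = (n - b) - (n - b) * (1 + harmonic (b - 1)) / b := by
        rw [← mul_sum, sum_Icc_one_sub_inv, Nat.cast_sub hb]
        field_simp
        ring

theorem sum_Icc_sub_eq (n : ℕ) : ∑ b ∈ Icc 1 n, ((n : ℝ) - b) = n * (n - 1) / 2 := by
  induction n with
  | zero => simp
  | succ n ih =>
    rw [sum_Icc_succ_top (by omega)]
    push_cast
    simp_rw [add_sub_right_comm _ (1 : ℝ), sum_add_distrib, ih, sum_const, Nat.card_Icc]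
    simp
    ring

noncomputable def quadruplesDefect (n : ℕ) : ℝ :=
  ∑ b ∈ Icc 1 n, ((n : ℝ) - b) * (1 + harmonic (b - 1)) / b

theorem quadruplesDefect_nonneg (n : ℕ) : 0 ≤ quadruplesDefect n :=
  sum_nonneg fun b hb => by
    have hbn : (b : ℝ) ≤ n := by exact_mod_cast (mem_Icc.1 hb).2
    have hH : (0 : ℝ) ≤ harmonic (b - 1) := by exact_mod_cast harmonic_nonneg (b - 1)
    exact div_nonneg (mul_nonneg (sub_nonneg.2 hbn) (by linarith)) b.cast_nonneg

theorem quadruplesDefect_le (n : ℕ) : quadruplesDefect n ≤ n * (1 + harmonic n) ^ 2 := by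
  have hH : (0 : ℝ) ≤ harmonic n := by exact_mod_cast harmonic_nonneg n
  calc quadruplesDefect n ≤ ∑ b ∈ Icc 1 n, n * (1 + harmonic n) * (b : ℝ)⁻¹ := by
        refine sum_le_sum fun b hb => ?_
        have hHb : (0 : ℝ) ≤ harmonic (b - 1) := by exact_mod_cast harmonic_nonneg (b - 1)
        have hHn : (harmonic (b - 1) : ℝ) ≤ harmonic n := by
          exact_mod_cast harmonic_mono (Nat.sub_le b 1 |>.trans (mem_Icc.1 hb).2)
        rw [div_eq_mul_inv]
        gcongr
        exact sub_le_self _ b.cast_nonneg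
    _ = n * (1 + harmonic n) * harmonic n := by
        rw [← mul_sum, harmonic_eq_sum_Icc]
        push_cast
        rfl
    _ ≤ n * (1 + harmonic n) ^ 2 := by rw [sq, ← mul_assoc]; gcongr; linarith

theorem sum_quadruples_eq_sub_quadruplesDefect (n : ℕ) :
    ∑ p ∈ quadruples n, 1 / (((p.2.1 : ℝ) + p.2.2.2) * ((p.2.1 : ℝ) + p.2.2.1 + p.2.2.2)) =
      n * (n - 1) / 2 - quadruplesDefect n := by
  rw [sum_quadruples_eq_sum_Icc_Icc, ← sum_Icc_sub_eq, quadruplesDefect, ← sum_sub_distrib]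
  exact sum_congr rfl fun b hb => sum_Icc_sub_mul_sub_one_div n b (mem_Icc.1 hb).1

theorem tendsto_add_log_sq_div_atTop (c : ℝ) :
    Tendsto (fun x => (c + Real.log x) ^ 2 / x) atTop (𝓝 0) := by
  have h k := Real.tendsto_pow_log_div_mul_add_atTop 1 0 k one_ne_zero
  have := (((h 0).const_mul (c ^ 2)).add ((h 1).const_mul (2 * c))).add (h 2)
  simp only [one_mul, add_zero, mul_zero, pow_zero, pow_one] at this
  refine this.congr fun x => ?_
  ring

theorem tendsto_one_add_harmonic_sq_div :
    Tendsto (fun n : ℕ => (1 + (harmonic n : ℝ)) ^ 2 / n) atTop (𝓝 0) := by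
  refine squeeze_zero (fun n => by positivity) (fun n => ?_)
    ((tendsto_add_log_sq_div_atTop 2).comp tendsto_natCast_atTop_atTop)
  have hlog := harmonic_le_one_add_log n
  have hH : (0 : ℝ) ≤ harmonic n := by exact_mod_cast harmonic_nonneg n
  simp only [Function.comp_apply]
  gcongr ?_ ^ 2 / _
  linarith

theorem tendsto_quadruplesDefect_div_sq :
    Tendsto (fun n : ℕ => quadruplesDefect n / ((n : ℝ) ^ 2 / 2)) atTop (𝓝 0) := by
  refine squeeze_zero' (.of_forall fun n => div_nonneg (quadruplesDefect_nonneg n) (by positivity))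
    ?_ (by simpa using tendsto_one_add_harmonic_sq_div.const_mul 2)
  filter_upwards [eventually_ne_atTop 0] with n hn
  calc quadruplesDefect n / ((n : ℝ) ^ 2 / 2)
      ≤ n * (1 + (harmonic n : ℝ)) ^ 2 / ((n : ℝ) ^ 2 / 2) := by
        gcongr; exact quadruplesDefect_le n
    _ = 2 * ((1 + (harmonic n : ℝ)) ^ 2 / n) := by field_simp

/-- As `n → ∞`, the sum `∑ 1/((r+s)(r+ℓ+s))` over integers `k₁, r, ℓ, s ≥ 1` with
`k₁ + r + ℓ + s ≤ n` is asymptotically equivalent to `n²/2`. -/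
theorem sum_inv_rs_rls_asymptotic :
    Tendsto (fun n : ℕ =>
      (∑ p ∈ (Finset.Icc 1 n ×ˢ Finset.Icc 1 n ×ˢ
          Finset.Icc 1 n ×ˢ Finset.Icc 1 n).filter
          (fun p : ℕ × ℕ × ℕ × ℕ => p.1 + p.2.1 + p.2.2.1 + p.2.2.2 ≤ n),
        1 / (((p.2.1 : ℝ) + p.2.2.2) * ((p.2.1 : ℝ) + p.2.2.1 + p.2.2.2)))
        / ((n : ℝ) ^ 2 / 2))
      atTop (nhds 1) := by
  have hlim : Tendsto (fun n : ℕ => 1 - 1 / (n : ℝ) - quadruplesDefect n / ((n : ℝ) ^ 2 / 2))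
      atTop (𝓝 1) := by
    simpa using (tendsto_const_nhds.sub tendsto_one_div_atTop_nhds_zero_nat).sub
      tendsto_quadruplesDefect_div_sq
  refine hlim.congr' ?_
  filter_upwards [eventually_ne_atTop 0] with n hn
  rw [← quadruples, sum_quadruples_eq_sub_quadruplesDefect]
  field_simp
end

section
/- Let (Ω, F, P) be a probability space, c > 0, and let (V_n)_{n ≥ 1} be square-integrable real random variables on Ω such that 0 ≤ V_n(ω) ≤ V_{n+1}(ω) for all n and all ω, E[V_n] = c·n·log n + O(n), and Var(V_n) = O(n²) as n → ∞. Then V_n/(n·log n) → c P-almost surely. -/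
/-!
Along the subsequence `N k = ⌈exp (k ^ (3/4))⌉₊`, Chebyshev's inequality bounds the probability
that `V (N k) / (N k log N k)` deviates from its mean by `ε` by `O(1 / log² N k) = O(k ^ (-3/2))`,
which is summable, so Borel–Cantelli gives almost sure convergence along the subsequence; the
means converge to `c` by the hypothesis on `E[V n]`. Because the increments of `k ^ (3/4)` tend
to `0`, consecutive values of `n log n` along the subsequence have ratio tending to `1`, and the
monotonicity of `n ↦ V n` interpolates between them.
-/

open Filter MeasureTheory ProbabilityTheory Real Topology

lemma exists_le_lt_succ_of_tendsto_atTop {u : ℕ → ℕ} (hu : Tendsto u atTop atTop) {K n : ℕ}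
    (hK : u K ≤ n) : ∃ k ≥ K, u k ≤ n ∧ n < u (k + 1) := by
  classical
  have hex : ∃ j, K < j ∧ n < u j :=
    ((eventually_gt_atTop K).and (hu.eventually_gt_atTop n)).exists
  obtain ⟨hKj, hnj⟩ := Nat.find_spec hex
  obtain ⟨k, hk⟩ : ∃ k, Nat.find hex = k + 1 := Nat.exists_eq_succ_of_ne_zero (by omega)
  refine ⟨k, by omega, ?_, hk ▸ hnj⟩
  rcases (show K ≤ k by omega).eq_or_lt with rfl | hKk
  · exact hK
  · exact not_lt.1 fun hnk => Nat.find_min hex (show k < Nat.find hex by omega) ⟨hKk, hnk⟩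

theorem tendsto_div_of_monotone_of_subseq {f g : ℕ → ℝ} {u : ℕ → ℕ} {c : ℝ}
    (hf : Monotone f) (hf0 : ∀ n, 0 ≤ f n) (hg : Monotone g) (hg0 : ∀ᶠ n in atTop, 0 < g n)
    (hu : Tendsto u atTop atTop)
    (hratio : Tendsto (fun k => g (u (k + 1)) / g (u k)) atTop (𝓝 1))
    (hlim : Tendsto (fun k => f (u k) / g (u k)) atTop (𝓝 c)) :
    Tendsto (fun n => f n / g n) atTop (𝓝 c) := by
  have hgu : ∀ᶠ k in atTop, 0 < g (u k) := hu.eventually hg0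
  have hlo : Tendsto (fun k => f (u k) / g (u (k + 1))) atTop (𝓝 c) := by
    refine (div_one c ▸ hlim.div hratio one_ne_zero).congr' ?_
    filter_upwards [hgu] with k hk
    exact div_div_div_cancel_right₀ hk.ne' _ _
  have hhi : Tendsto (fun k => f (u (k + 1)) / g (u k)) atTop (𝓝 c) := by
    refine (mul_one c ▸ (hlim.comp (tendsto_add_atTop_nat 1)).mul hratio).congr' ?_
    filter_upwards [(tendsto_add_atTop_nat 1).eventually hgu] with k hk
    exact div_mul_div_cancel₀ hk.ne'
  rw [tendsto_order]
  refine ⟨fun a ha => ?_, fun b hb => ?_⟩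
  · obtain ⟨K, hK⟩ := eventually_atTop.1 ((hlo.eventually (lt_mem_nhds ha)).and hgu)
    filter_upwards [eventually_ge_atTop (u K)] with n hn
    obtain ⟨k, hkK, hkn, hnk⟩ := exists_le_lt_succ_of_tendsto_atTop hu hn
    have hgn : 0 < g n := (hK k hkK).2.trans_le (hg hkn)
    calc a < f (u k) / g (u (k + 1)) := (hK k hkK).1
      _ ≤ f (u k) / g n := div_le_div_of_nonneg_left (hf0 _) hgn (hg hnk.le)
      _ ≤ f n / g n := div_le_div_of_nonneg_right (hf hkn) hgn.le
  · obtain ⟨K, hK⟩ := eventually_atTop.1 ((hhi.eventually (gt_mem_nhds hb)).and hgu)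
    filter_upwards [eventually_ge_atTop (u K)] with n hn
    obtain ⟨k, hkK, hkn, hnk⟩ := exists_le_lt_succ_of_tendsto_atTop hu hn
    have hgn : 0 < g n := (hK k hkK).2.trans_le (hg hkn)
    calc f n / g n ≤ f (u (k + 1)) / g n := div_le_div_of_nonneg_right (hf hnk.le) hgn.le
      _ ≤ f (u (k + 1)) / g (u k) := div_le_div_of_nonneg_left (hf0 _) (hK k hkK).2 (hg hkn)
      _ < b := (hK k hkK).1

lemma monotone_natCast_mul_log : Monotone fun n : ℕ => (n : ℝ) * log n := by
  refine monotone_nat_of_le_succ fun n => ?_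
  rcases n.eq_zero_or_pos with rfl | hn
  · simp
  have hn' : (0 : ℝ) < n := Nat.cast_pos.2 hn
  push_cast
  exact mul_le_mul (by linarith) (log_le_log hn' (by linarith))
    (log_natCast_nonneg n) (by linarith)

lemma tendsto_div_natCast_mul_log_of_abs_sub_le {a : ℕ → ℝ} {c C : ℝ}
    (h : ∀ n : ℕ, 2 ≤ n → |a n - c * n * log n| ≤ C * n) :
    Tendsto (fun n : ℕ => a n / (n * log n)) atTop (𝓝 c) := by
  have hlog : Tendsto (fun n : ℕ => log n) atTop atTop :=
    tendsto_log_atTop.comp tendsto_natCast_atTop_atTop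
  rw [tendsto_iff_norm_sub_tendsto_zero]
  refine squeeze_zero' (.of_forall fun _ => norm_nonneg _) ?_
    (tendsto_const_nhds.div_atTop hlog : Tendsto (fun n : ℕ => C / log n) atTop (𝓝 0))
  filter_upwards [eventually_ge_atTop 2] with n hn
  have hn' : (2 : ℝ) ≤ n := by exact_mod_cast hn
  have hL : 0 < log n := log_pos (by linarith)
  have hd : 0 < (n : ℝ) * log n := by positivity
  calc ‖a n / (n * log n) - c‖ = |a n - c * n * log n| / (n * log n) := by
        rw [Real.norm_eq_abs, div_sub' hd.ne', abs_div, abs_of_pos hd, mul_comm _ c, mul_assoc]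
    _ ≤ C * n / (n * log n) := by gcongr; exact h n hn
    _ = C / log n := by field_simp

lemma le_log_natCeil_exp (x : ℝ) : x ≤ log ⌈exp x⌉₊ :=
  (le_log_iff_exp_le (Nat.cast_pos.2 (Nat.ceil_pos.2 (exp_pos x)))).2 (Nat.le_ceil _)

lemma log_natCeil_exp_le {x : ℝ} (hx : 0 ≤ x) : log ⌈exp x⌉₊ ≤ x + 1 := by
  rw [log_le_iff_le_exp (Nat.cast_pos.2 (Nat.ceil_pos.2 (exp_pos x))), exp_add]
  have h1 : 1 ≤ exp x := one_le_exp hx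
  have h2 : 2 ≤ exp 1 := by linarith [add_one_le_exp (1 : ℝ)]
  nlinarith [Nat.ceil_lt_add_one (exp_pos x).le]

lemma exp_mul_le_natCeil_exp_mul_log {x : ℝ} (hx : 0 ≤ x) :
    exp x * x ≤ ⌈exp x⌉₊ * log ⌈exp x⌉₊ :=
  mul_le_mul (Nat.le_ceil _) (le_log_natCeil_exp x) hx (Nat.cast_nonneg _)

lemma natCeil_exp_mul_log_le {x : ℝ} (hx : 0 ≤ x) :
    ⌈exp x⌉₊ * log ⌈exp x⌉₊ ≤ (exp x + 1) * (x + 1) :=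
  mul_le_mul (Nat.ceil_lt_add_one (exp_pos x).le).le (log_natCeil_exp_le hx)
    (hx.trans (le_log_natCeil_exp x)) (by positivity)

theorem tendsto_natCeil_exp_mul_log_succ_div {x : ℕ → ℝ} (hmono : Monotone x)
    (htop : Tendsto x atTop atTop) (hstep : Tendsto (fun k => x (k + 1) - x k) atTop (𝓝 0)) :
    Tendsto (fun k => (⌈exp (x (k + 1))⌉₊ * log ⌈exp (x (k + 1))⌉₊ : ℝ) /
      (⌈exp (x k)⌉₊ * log ⌈exp (x k)⌉₊)) atTop (𝓝 1) := by
  have hpos : ∀ᶠ k in atTop, 0 < x k := htop.eventually_gt_atTop 0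
  have hbound : Tendsto (fun k => (exp (x (k + 1)) + 1) * (x (k + 1) + 1) / (exp (x k) * x k))
      atTop (𝓝 1) := by
    have hexp : Tendsto (fun k => exp (x (k + 1) - x k) + exp (-x k)) atTop (𝓝 (1 + 0)) :=
      (exp_zero ▸ (continuous_exp.tendsto 0).comp hstep).add
        (tendsto_exp_neg_atTop_nhds_zero.comp htop)
    have hlin : Tendsto (fun k => 1 + (x (k + 1) - x k + 1) / x k) atTop (𝓝 (1 + 0)) :=
      tendsto_const_nhds.add ((zero_add (1 : ℝ) ▸ hstep.add_const 1).div_atTop htop)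
    have hprod := hexp.mul hlin
    rw [add_zero, mul_one] at hprod
    refine hprod.congr' ?_
    filter_upwards [hpos] with k hk
    rw [exp_sub, exp_neg]
    field_simp
    ring
  refine tendsto_of_tendsto_of_tendsto_of_le_of_le' tendsto_const_nhds hbound ?_ ?_
  · filter_upwards [hpos] with k hk
    have hD := (mul_pos (exp_pos _) hk).trans_le (exp_mul_le_natCeil_exp_mul_log hk.le)
    refine (one_le_div hD).2 (monotone_natCast_mul_log ?_)
    exact Nat.ceil_mono (exp_le_exp.2 (hmono k.le_succ))
  · filter_upwards [hpos] with k hk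
    have hk' : 0 ≤ x (k + 1) := hk.le.trans (hmono k.le_succ)
    exact div_le_div₀ (by positivity) (natCeil_exp_mul_log_le hk')
      (by positivity) (exp_mul_le_natCeil_exp_mul_log hk.le)

theorem tendsto_natCast_succ_rpow_sub_rpow {p : ℝ} (hp0 : 0 ≤ p) (hp1 : p < 1) :
    Tendsto (fun k : ℕ => ((k + 1 : ℕ) : ℝ) ^ p - (k : ℝ) ^ p) atTop (𝓝 0) := by
  refine squeeze_zero' (.of_forall fun k => sub_nonneg.2 ?_) ?_
    ((tendsto_rpow_neg_atTop (by linarith : 0 < 1 - p)).comp tendsto_natCast_atTop_atTop)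
  · exact rpow_le_rpow (Nat.cast_nonneg k) (by simp) hp0
  filter_upwards [eventually_gt_atTop 0] with k hk
  have hk' : (0 : ℝ) < k := Nat.cast_pos.2 hk
  have hsplit : (k : ℝ) + 1 = k * (1 + (k : ℝ)⁻¹) := by field_simp
  have hpow : (1 + (k : ℝ)⁻¹) ^ p ≤ 1 + (k : ℝ)⁻¹ :=
    rpow_le_self_of_one_le (by simp) hp1.le
  calc ((k + 1 : ℕ) : ℝ) ^ p - (k : ℝ) ^ p = (k : ℝ) ^ p * ((1 + (k : ℝ)⁻¹) ^ p - 1) := by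
        rw [Nat.cast_succ, hsplit, mul_rpow hk'.le (by positivity)]; ring
    _ ≤ (k : ℝ) ^ p * (k : ℝ)⁻¹ := by gcongr; linarith
    _ = (k : ℝ) ^ (-(1 - p)) := by rw [← rpow_neg_one, ← rpow_add hk']; ring_nf

section Variance

variable {Ω : Type*} [MeasurableSpace Ω] {μ : Measure Ω}

theorem ae_tendsto_sub_integral_of_summable_variance [IsFiniteMeasure μ] {Y : ℕ → Ω → ℝ}
    (hY : ∀ k, MemLp (Y k) 2 μ) (hsum : Summable fun k => variance (Y k) μ) :
    ∀ᵐ ω ∂μ, Tendsto (fun k => Y k ω - μ[Y k]) atTop (𝓝 0) := by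
  have hdev : ∀ m : ℕ, ∀ᵐ ω ∂μ, ∀ᶠ k in atTop, |Y k ω - μ[Y k]| < 1 / (m + 1) := by
    intro m
    have hε : (0 : ℝ) < 1 / (m + 1) := by positivity
    have htsum : ∑' k, μ {ω | 1 / (m + 1) ≤ |Y k ω - μ[Y k]|} ≠ ⊤ := by
      refine ne_top_of_le_ne_top ?_
        (ENNReal.tsum_le_tsum fun k => meas_ge_le_variance_div_sq (hY k) hε)
      rw [← ENNReal.ofReal_tsum_of_nonneg
        (fun k => div_nonneg (variance_nonneg _ _) (sq_nonneg _)) (hsum.div_const _)]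
      exact ENNReal.ofReal_ne_top
    filter_upwards [ae_eventually_notMem htsum] with ω hω
    filter_upwards [hω] with k hk using not_le.1 hk
  filter_upwards [ae_all_iff.2 hdev] with ω hω
  refine NormedAddGroup.tendsto_nhds_zero.2 fun ε hε => ?_
  obtain ⟨m, hm⟩ := exists_nat_one_div_lt hε
  filter_upwards [hω m] with k hk using hk.trans hm

lemma variance_div_const (X : Ω → ℝ) (d : ℝ) (μ : Measure Ω) :
    variance (fun ω => X ω / d) μ = variance X μ / d ^ 2 := by
  simp_rw [div_eq_mul_inv, variance_mul_const, inv_pow]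

lemma variance_div_natCast_mul_log_le {X : Ω → ℝ} {C : ℝ} {n : ℕ} (hn : n ≠ 0)
    (hX : variance X μ ≤ C * n ^ 2) :
    variance (fun ω => X ω / (n * log n)) μ ≤ C / log n ^ 2 :=
  calc variance (fun ω => X ω / (n * log n)) μ ≤ C * n ^ 2 / (n * log n) ^ 2 := by
        rw [variance_div_const]; gcongr
    _ = C / log n ^ 2 := by
        rw [mul_pow, mul_comm C, mul_div_mul_left _ _ (by positivity)]

theorem summable_variance_div_natCeil_exp {V : ℕ → Ω → ℝ} {C : ℝ} (hC : 0 ≤ C)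
    (hV : ∀ n : ℕ, 1 ≤ n → variance (V n) μ ≤ C * n ^ 2) {x : ℕ → ℝ}
    (htop : Tendsto x atTop atTop) (hsum : Summable fun k => (x k ^ 2)⁻¹) :
    Summable fun k => variance (fun ω => V ⌈exp (x k)⌉₊ ω /
      (⌈exp (x k)⌉₊ * log ⌈exp (x k)⌉₊)) μ := by
  refine (hsum.mul_left C).of_norm_bounded_eventually_nat ?_
  filter_upwards [htop.eventually_gt_atTop 0] with k hk
  have hN : 0 < ⌈exp (x k)⌉₊ := Nat.ceil_pos.2 (exp_pos _)
  rw [Real.norm_of_nonneg (variance_nonneg _ _), ← div_eq_mul_inv]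
  calc _ ≤ C / log ⌈exp (x k)⌉₊ ^ 2 := variance_div_natCast_mul_log_le hN.ne' (hV _ hN)
    _ ≤ C / x k ^ 2 := by gcongr; exact le_log_natCeil_exp _

end Variance

theorem as_convergence_of_expectation_variance_general
    {Ω : Type*} [MeasureSpace Ω] [IsProbabilityMeasure (ℙ : Measure Ω)]
    (c : ℝ) (V : ℕ → Ω → ℝ)
    (hL2 : ∀ n : ℕ, 1 ≤ n → MemLp (V n) 2 ℙ)
    (hnonneg : ∀ n : ℕ, ∀ ω : Ω, 0 ≤ V n ω)
    (hmono : ∀ n : ℕ, ∀ ω : Ω, V n ω ≤ V (n + 1) ω)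
    (hexp : ∃ C > 0, ∀ n : ℕ, 2 ≤ n →
      |(∫ ω, V n ω) - c * n * Real.log n| ≤ C * n)
    (hvar : ∃ C' > 0, ∀ n : ℕ, 1 ≤ n → variance (V n) ℙ ≤ C' * (n : ℝ) ^ 2) :
    ∀ᵐ ω, Tendsto (fun n : ℕ => V n ω / ((n : ℝ) * Real.log n)) atTop (nhds c) := by
  obtain ⟨C, -, hE⟩ := hexp
  obtain ⟨C', hC', hV⟩ := hvar
  set x : ℕ → ℝ := fun k => (k : ℝ) ^ (3 / 4 : ℝ)
  have hx_mono : Monotone x := fun a b hab =>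
    rpow_le_rpow (Nat.cast_nonneg a) (Nat.cast_le.2 hab) (by norm_num)
  have hx_top : Tendsto x atTop atTop :=
    (tendsto_rpow_atTop (by norm_num)).comp tendsto_natCast_atTop_atTop
  have hx_sum : Summable fun k => (x k ^ 2)⁻¹ := by
    refine (summable_nat_rpow_inv.2 (by norm_num : (1 : ℝ) < 3 / 2)).congr fun k => ?_
    rw [← rpow_natCast, ← rpow_mul (Nat.cast_nonneg k)]
    norm_num
  set N : ℕ → ℕ := fun k => ⌈exp (x k)⌉₊
  have hN : Tendsto N atTop atTop := tendsto_nat_ceil_atTop.comp (tendsto_exp_atTop.comp hx_top)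
  have hmean := (tendsto_div_natCast_mul_log_of_abs_sub_le hE).comp hN
  have hfluct := ae_tendsto_sub_integral_of_summable_variance
    (fun k => by
      simpa only [div_eq_mul_inv] using (hL2 (N k) (Nat.ceil_pos.2 (exp_pos _))).mul_const _)
    (summable_variance_div_natCeil_exp hC'.le hV hx_top hx_sum)
  have hpos : ∀ᶠ n : ℕ in atTop, 0 < (n : ℝ) * log n := by
    filter_upwards [eventually_ge_atTop 2] with n hn
    have hn' : (2 : ℝ) ≤ n := by exact_mod_cast hn
    exact mul_pos (by linarith) (log_pos (by linarith))
  filter_upwards [hfluct] with ω hω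
  refine tendsto_div_of_monotone_of_subseq (monotone_nat_of_le_succ (hmono · ω)) (hnonneg · ω)
    monotone_natCast_mul_log hpos hN (tendsto_natCeil_exp_mul_log_succ_div hx_mono hx_top
      (tendsto_natCast_succ_rpow_sub_rpow (by norm_num) (by norm_num))) ?_
  simpa [N, integral_div] using hω.add hmean

/-- If `(V_n)` are nondecreasing nonnegative square-integrable random variables with
`E[V_n] = c·n·log n + O(n)` and `Var(V_n) = O(n²)`, then `V_n/(n·log n) → c` a.s. -/
theorem as_convergence_of_expectation_variance
    {Ω : Type*} [MeasureSpace Ω] [IsProbabilityMeasure (ℙ : Measure Ω)]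
    (c : ℝ) (hc : 0 < c) (V : ℕ → Ω → ℝ)
    (hL2 : ∀ n : ℕ, 1 ≤ n → MemLp (V n) 2 ℙ)
    (hnonneg : ∀ n : ℕ, ∀ ω : Ω, 0 ≤ V n ω)
    (hmono : ∀ n : ℕ, ∀ ω : Ω, V n ω ≤ V (n + 1) ω)
    (hexp : ∃ C > 0, ∀ n : ℕ, 2 ≤ n →
      |(∫ ω, V n ω) - c * n * Real.log n| ≤ C * n)
    (hvar : ∃ C' > 0, ∀ n : ℕ, 1 ≤ n → variance (V n) ℙ ≤ C' * (n : ℝ) ^ 2) :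
    ∀ᵐ ω, Tendsto (fun n : ℕ => V n ω / ((n : ℝ) * Real.log n)) atTop (nhds c) :=
  as_convergence_of_expectation_variance_general c V hL2 hnonneg hmono hexp hvar
end

section
/- There exists C > 0 such that for every integer n ≥ 1, the sum ∑ √(min(r,ℓ,s))/(rℓs), taken over all integers k₁ ≥ 1, r ≥ 1, ℓ ≥ 1, s ≥ 1 with k₁ + r + ℓ + s ≤ n, is at most C·n^{3/2}. -/
open Finset

lemma sum_rpow_le_aux (n : ℕ) :
    ∑ r ∈ Finset.Icc 1 n, (r : ℝ) ^ (-(5:ℝ)/6) ≤ 6 * (n : ℝ) ^ ((1:ℝ)/6) := by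
  induction n with
  | zero => simp
  | succ n ih =>
    rw [Finset.sum_Icc_succ_top (by omega : 1 ≤ n + 1)]
    have hn : (0:ℝ) ≤ n := Nat.cast_nonneg n
    have hn1 : (0:ℝ) < ((n+1:ℕ):ℝ) := by positivity
    set a : ℝ := ((n+1 : ℕ) : ℝ) ^ ((1:ℝ)/6) with ha
    set b : ℝ := (n : ℝ) ^ ((1:ℝ)/6) with hb
    have ha6 : a ^ 6 = ((n+1:ℕ):ℝ) := by
      rw [ha, ← Real.rpow_natCast (((n+1:ℕ):ℝ) ^ ((1:ℝ)/6)) 6,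
        ← Real.rpow_mul (le_of_lt hn1)]
      norm_num
    have hb6 : b ^ 6 = (n:ℝ) := by
      rw [hb, ← Real.rpow_natCast ((n:ℝ) ^ ((1:ℝ)/6)) 6, ← Real.rpow_mul hn]
      norm_num
    have hba : b ≤ a := by
      apply Real.rpow_le_rpow hn (by push_cast; linarith) (by norm_num)
    have ha0 : 0 < a := Real.rpow_pos_of_pos hn1 _
    have hb0 : 0 ≤ b := Real.rpow_nonneg hn _
    have ha5 : a ^ 5 = ((n+1:ℕ):ℝ) ^ ((5:ℝ)/6) := by
      rw [ha, ← Real.rpow_natCast (((n+1:ℕ):ℝ) ^ ((1:ℝ)/6)) 5,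
        ← Real.rpow_mul (le_of_lt hn1)]
      norm_num
    have h1 : ((n+1:ℕ):ℝ) ^ (-(5:ℝ)/6) = 1 / a ^ 5 := by
      rw [ha5, one_div, ← Real.rpow_neg (le_of_lt hn1)]
      norm_num
    have hdiff : a ^ 6 - b ^ 6 = 1 := by rw [ha6, hb6]; push_cast; ring
    have key : 1 / a ^ 5 ≤ 6 * (a - b) := by
      rw [div_le_iff₀ (by positivity)]
      nlinarith [mul_nonneg (sub_nonneg.2 hba) (pow_nonneg hb0 5),
        mul_nonneg (mul_nonneg (sub_nonneg.2 hba) (sub_nonneg.2 hba)) (mul_nonneg (pow_nonneg ha0.le 2) (pow_nonneg hb0 2)),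
        mul_nonneg (mul_nonneg (sub_nonneg.2 hba) (sub_nonneg.2 hba)) (mul_nonneg (pow_nonneg ha0.le 3) hb0),
        mul_nonneg (mul_nonneg (sub_nonneg.2 hba) (sub_nonneg.2 hba)) (pow_nonneg ha0.le 4),
        mul_nonneg (mul_nonneg (sub_nonneg.2 hba) (sub_nonneg.2 hba)) (mul_nonneg ha0.le (pow_nonneg hb0 3)),
        mul_nonneg (mul_nonneg (sub_nonneg.2 hba) (sub_nonneg.2 hba)) (pow_nonneg hb0 4)]
    calc ∑ r ∈ Finset.Icc 1 n, (r : ℝ) ^ (-(5:ℝ)/6) + ((n+1:ℕ):ℝ) ^ (-(5:ℝ)/6)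
        ≤ 6 * b + 1 / a ^ 5 := by rw [← h1]; exact add_le_add ih le_rfl
      _ ≤ 6 * a := by linarith

lemma term_le (r ℓ s : ℕ) (hr : 1 ≤ r) (hl : 1 ≤ ℓ) (hs : 1 ≤ s) :
    Real.sqrt (min (r:ℝ) (min (ℓ:ℝ) (s:ℝ))) / ((r:ℝ) * ℓ * s)
      ≤ (r:ℝ) ^ (-(5:ℝ)/6) * (ℓ:ℝ) ^ (-(5:ℝ)/6) * (s:ℝ) ^ (-(5:ℝ)/6) := by
  have hr0 : (0:ℝ) < r := by exact_mod_cast hr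
  have hl0 : (0:ℝ) < ℓ := by exact_mod_cast hl
  have hs0 : (0:ℝ) < s := by exact_mod_cast hs
  set m : ℝ := min (r:ℝ) (min (ℓ:ℝ) (s:ℝ)) with hm
  have hm0 : 0 < m := lt_min hr0 (lt_min hl0 hs0)
  have hnum : Real.sqrt m ≤ (r:ℝ)^((1:ℝ)/6) * (ℓ:ℝ)^((1:ℝ)/6) * (s:ℝ)^((1:ℝ)/6) := by
    rw [Real.sqrt_eq_rpow]
    have heq : ((1:ℝ)/2) = 1/6 + 1/6 + 1/6 := by norm_num
    rw [heq, Real.rpow_add hm0, Real.rpow_add hm0]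
    have h1 : m ^ ((1:ℝ)/6) ≤ (r:ℝ)^((1:ℝ)/6) :=
      Real.rpow_le_rpow hm0.le (min_le_left _ _) (by norm_num)
    have h2 : m ^ ((1:ℝ)/6) ≤ (ℓ:ℝ)^((1:ℝ)/6) :=
      Real.rpow_le_rpow hm0.le (le_trans (min_le_right _ _) (min_le_left _ _)) (by norm_num)
    have h3 : m ^ ((1:ℝ)/6) ≤ (s:ℝ)^((1:ℝ)/6) :=
      Real.rpow_le_rpow hm0.le (le_trans (min_le_right _ _) (min_le_right _ _)) (by norm_num)
    have hp : 0 ≤ m ^ ((1:ℝ)/6) := Real.rpow_nonneg hm0.le _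
    gcongr
  have hrw : ∀ x : ℝ, 0 < x → x ^ ((1:ℝ)/6) / x = x ^ (-(5:ℝ)/6) := by
    intro x hx
    rw [show x ^ ((1:ℝ)/6) / x = x ^ ((1:ℝ)/6) / x ^ (1:ℝ) by rw [Real.rpow_one],
      ← Real.rpow_sub hx]
    norm_num
  calc Real.sqrt m / ((r:ℝ) * ℓ * s)
      ≤ ((r:ℝ)^((1:ℝ)/6) * (ℓ:ℝ)^((1:ℝ)/6) * (s:ℝ)^((1:ℝ)/6)) / ((r:ℝ) * ℓ * s) := by
        gcongr
    _ = ((r:ℝ)^((1:ℝ)/6) / r) * ((ℓ:ℝ)^((1:ℝ)/6) / ℓ) * ((s:ℝ)^((1:ℝ)/6) / s) := by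
        field_simp
    _ = (r:ℝ) ^ (-(5:ℝ)/6) * (ℓ:ℝ) ^ (-(5:ℝ)/6) * (s:ℝ) ^ (-(5:ℝ)/6) := by
        rw [hrw _ hr0, hrw _ hl0, hrw _ hs0]

/-- There is `C > 0` such that for every `n ≥ 1`, the sum `∑ √(min(r,ℓ,s))/(rℓs)` over
integers `k₁, r, ℓ, s ≥ 1` with `k₁ + r + ℓ + s ≤ n` is at most `C·n^{3/2}`. -/
theorem sum_sqrt_min_div_rls_bound :
    ∃ C > 0, ∀ n : ℕ, 1 ≤ n →
      (∑ p ∈ (Finset.Icc 1 n ×ˢ Finset.Icc 1 n ×ˢ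
          Finset.Icc 1 n ×ˢ Finset.Icc 1 n).filter
          (fun p : ℕ × ℕ × ℕ × ℕ => p.1 + p.2.1 + p.2.2.1 + p.2.2.2 ≤ n),
        Real.sqrt (min (p.2.1 : ℝ) (min (p.2.2.1 : ℝ) (p.2.2.2 : ℝ)))
          / ((p.2.1 : ℝ) * p.2.2.1 * p.2.2.2))
        ≤ C * (n : ℝ) ^ ((3 : ℝ) / 2) := by
  refine ⟨216, by norm_num, fun n hn => ?_⟩
  have hn0 : (0:ℝ) < n := by exact_mod_cast hn
  set f : ℕ → ℝ := fun r => (r:ℝ) ^ (-(5:ℝ)/6) with hf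
  have step1 : (∑ p ∈ (Finset.Icc 1 n ×ˢ Finset.Icc 1 n ×ˢ
          Finset.Icc 1 n ×ˢ Finset.Icc 1 n).filter
          (fun p : ℕ × ℕ × ℕ × ℕ => p.1 + p.2.1 + p.2.2.1 + p.2.2.2 ≤ n),
        Real.sqrt (min (p.2.1 : ℝ) (min (p.2.2.1 : ℝ) (p.2.2.2 : ℝ)))
          / ((p.2.1 : ℝ) * p.2.2.1 * p.2.2.2))
      ≤ ∑ p ∈ Finset.Icc 1 n ×ˢ Finset.Icc 1 n ×ˢ Finset.Icc 1 n ×ˢ Finset.Icc 1 n,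
          f p.2.1 * f p.2.2.1 * f p.2.2.2 := by
    apply le_trans (Finset.sum_le_sum_of_subset_of_nonneg (Finset.filter_subset _ _) ?_) ?_
    · intro p _ _
      positivity
    · apply Finset.sum_le_sum
      intro p hp
      simp only [Finset.mem_product, Finset.mem_Icc] at hp
      exact term_le _ _ _ hp.2.1.1 hp.2.2.1.1 hp.2.2.2.1
  have step2 : ∑ p ∈ Finset.Icc 1 n ×ˢ Finset.Icc 1 n ×ˢ Finset.Icc 1 n ×ˢ Finset.Icc 1 n,
          f p.2.1 * f p.2.2.1 * f p.2.2.2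
      = (n : ℝ) * (∑ r ∈ Finset.Icc 1 n, f r) ^ 3 := by
    simp only [Finset.sum_product, ← Finset.mul_sum, ← Finset.sum_mul]
    rw [Finset.sum_const, Nat.card_Icc, nsmul_eq_mul]
    push_cast
    ring
  have hS0 : 0 ≤ ∑ r ∈ Finset.Icc 1 n, f r := by
    apply Finset.sum_nonneg
    intro i _
    exact Real.rpow_nonneg (Nat.cast_nonneg i) _
  have step3 : (∑ r ∈ Finset.Icc 1 n, f r) ^ 3 ≤ 216 * (n:ℝ) ^ ((1:ℝ)/2) := by
    calc (∑ r ∈ Finset.Icc 1 n, f r) ^ 3 ≤ (6 * (n : ℝ) ^ ((1:ℝ)/6)) ^ 3 := by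
          exact pow_le_pow_left₀ hS0 (sum_rpow_le_aux n) 3
      _ = 216 * ((n : ℝ) ^ ((1:ℝ)/6)) ^ 3 := by ring
      _ = 216 * (n:ℝ) ^ ((1:ℝ)/2) := by
          rw [← Real.rpow_natCast ((n:ℝ) ^ ((1:ℝ)/6)) 3, ← Real.rpow_mul hn0.le]
          norm_num
  calc (∑ p ∈ (Finset.Icc 1 n ×ˢ Finset.Icc 1 n ×ˢ
          Finset.Icc 1 n ×ˢ Finset.Icc 1 n).filter
          (fun p : ℕ × ℕ × ℕ × ℕ => p.1 + p.2.1 + p.2.2.1 + p.2.2.2 ≤ n),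
        Real.sqrt (min (p.2.1 : ℝ) (min (p.2.2.1 : ℝ) (p.2.2.2 : ℝ)))
          / ((p.2.1 : ℝ) * p.2.2.1 * p.2.2.2))
      ≤ (n : ℝ) * (∑ r ∈ Finset.Icc 1 n, f r) ^ 3 := by rw [← step2]; exact step1
    _ ≤ (n : ℝ) * (216 * (n:ℝ) ^ ((1:ℝ)/2)) := by
        exact mul_le_mul_of_nonneg_left step3 hn0.le
    _ = 216 * ((n:ℝ) ^ (1:ℝ) * (n:ℝ) ^ ((1:ℝ)/2)) := by rw [Real.rpow_one]; ring
    _ = 216 * (n : ℝ) ^ ((3 : ℝ) / 2) := by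
        rw [← Real.rpow_add hn0]; norm_num
end
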